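/- arXiv:math/9806080 — 7 statements merged into one kernel-verified Lean document; each statement's English description precedes it below -/
import Mathlib

section
/- For any three distinct points a, b, c in the Euclidean plane, if one of the angles of triangle abc is at least 2π/3, say the angle at vertex b, then for every point p in the plane, d(p,a) + d(p,b) + d(p,c) ≥ d(a,b) + d(b,c); i.e., the minimal Steiner tree of {a,b,c} consists of the two edges meeting at b. -/
open Real EuclideanGeometry
open scoped RealInnerProductSpace

/-- If one angle of a triangle in the Euclidean plane is at least `2π/3`, say at vertex `b`,
then for every point `p`, `d(p,a)+d(p,b)+d(p,c) ≥ d(a,b)+d(b,c)`: the minimal Steiner tree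
of `{a,b,c}` consists of the two edges meeting at `b`. -/
theorem steiner_tree_obtuse_angle (a b c : EuclideanSpace ℝ (Fin 2))
    (hab : a ≠ b) (hbc : b ≠ c) (hac : a ≠ c)
    (hangle : 2 * π / 3 ≤ ∠ a b c) :
    ∀ p : EuclideanSpace ℝ (Fin 2),
      dist a b + dist b c ≤ dist p a + dist p b + dist p c := by
  intro p
  set x : EuclideanSpace ℝ (Fin 2) := a - b with hxdef
  set y : EuclideanSpace ℝ (Fin 2) := c - b with hydef
  have hx0 : x ≠ 0 := sub_ne_zero.mpr hab
  have hy0 : y ≠ 0 := sub_ne_zero.mpr hbc.symm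
  set u : EuclideanSpace ℝ (Fin 2) := ‖x‖⁻¹ • x with hudef
  set v : EuclideanSpace ℝ (Fin 2) := ‖y‖⁻¹ • y with hvdef
  have hnu : ‖u‖ = 1 := norm_smul_inv_norm hx0
  have hnv : ‖v‖ = 1 := norm_smul_inv_norm hy0
  have hxpos : (0:ℝ) < ‖x‖ := norm_pos_iff.mpr hx0
  have hypos : (0:ℝ) < ‖y‖ := norm_pos_iff.mpr hy0
  -- angle as inner product angle
  have hangle' : ∠ a b c = InnerProductGeometry.angle x y := rfl
  have hcos : Real.cos (∠ a b c) = ⟪x, y⟫ / (‖x‖ * ‖y‖) := by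
    rw [hangle', InnerProductGeometry.cos_angle]
  have hcosle : Real.cos (∠ a b c) ≤ Real.cos (2 * π / 3) := by
    apply Real.cos_le_cos_of_nonneg_of_le_pi
    · positivity
    · exact EuclideanGeometry.angle_le_pi a b c
    · exact hangle
  have hcosval : Real.cos (2 * π / 3) = -(1/2) := by
    have : (2 : ℝ) * π / 3 = π - π/3 := by ring
    rw [this, Real.cos_pi_sub, Real.cos_pi_div_three]
  have hxy : ⟪x, y⟫ ≤ -(1/2) * (‖x‖ * ‖y‖) := by
    have h := hcosle
    rw [hcos, hcosval] at h
    have := (div_le_iff₀ (by positivity)).mp h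
    linarith
  have huv : ⟪u, v⟫ ≤ -(1/2) := by
    rw [hudef, hvdef, real_inner_smul_left, real_inner_smul_right]
    rw [show ‖x‖⁻¹ * (‖y‖⁻¹ * ⟪x, y⟫) = ⟪x, y⟫ / (‖x‖ * ‖y‖) by field_simp]
    rw [div_le_iff₀ (by positivity)]
    linarith
  have hsum : ‖u + v‖ ≤ 1 := by
    have hsq : ‖u + v‖ ^ 2 = ‖u‖ ^ 2 + 2 * ⟪u, v⟫ + ‖v‖ ^ 2 := norm_add_sq_real u v
    rw [hnu, hnv] at hsq
    nlinarith [norm_nonneg (u + v)]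
  -- Cauchy–Schwarz estimates
  have hxu : ⟪x, u⟫ = ‖x‖ := by
    rw [hudef, real_inner_smul_right, real_inner_self_eq_norm_sq]
    field_simp
  have hyv : ⟪y, v⟫ = ‖y‖ := by
    rw [hvdef, real_inner_smul_right, real_inner_self_eq_norm_sq]
    field_simp
  have h1 : ‖x‖ + ⟪b - p, u⟫ ≤ dist p a := by
    have hsplit : (a - p : EuclideanSpace ℝ (Fin 2)) = x + (b - p) := by
      rw [hxdef]; abel
    have hCS : ⟪a - p, u⟫ ≤ ‖a - p‖ * ‖u‖ := real_inner_le_norm _ _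
    rw [hnu, mul_one] at hCS
    rw [hsplit, inner_add_left, hxu] at hCS
    have heq : ‖x + (b - p)‖ = ‖p - a‖ := by rw [← hsplit, norm_sub_rev]
    rw [dist_eq_norm]
    linarith
  have h2 : ‖y‖ + ⟪b - p, v⟫ ≤ dist p c := by
    have hsplit : (c - p : EuclideanSpace ℝ (Fin 2)) = y + (b - p) := by
      rw [hydef]; abel
    have hCS : ⟪c - p, v⟫ ≤ ‖c - p‖ * ‖v‖ := real_inner_le_norm _ _
    rw [hnv, mul_one] at hCS
    rw [hsplit, inner_add_left, hyv] at hCS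
    have heq : ‖y + (b - p)‖ = ‖p - c‖ := by rw [← hsplit, norm_sub_rev]
    rw [dist_eq_norm]
    linarith
  have h3 : -(dist p b) ≤ ⟪b - p, u + v⟫ := by
    have habs : |⟪b - p, u + v⟫| ≤ ‖b - p‖ * ‖u + v‖ := abs_real_inner_le_norm _ _
    have hb : ‖b - p‖ * ‖u + v‖ ≤ ‖b - p‖ * 1 :=
      mul_le_mul_of_nonneg_left hsum (norm_nonneg _)
    rw [dist_eq_norm, norm_sub_rev]
    have := neg_abs_le ⟪b - p, u + v⟫
    linarith [abs_nonneg ⟪b - p, u + v⟫]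
  have hinner : ⟪b - p, u + v⟫ = ⟪b - p, u⟫ + ⟪b - p, v⟫ := inner_add_right _ _ _
  have hdab : dist a b = ‖x‖ := by rw [dist_eq_norm]
  have hdbc : dist b c = ‖y‖ := by rw [dist_eq_norm, norm_sub_rev]
  rw [hdab, hdbc]
  linarith
end

section
/- If four or more distinct rays (half-lines) in ℝ³ emanate from a common point p, then at least one pair of these rays makes an angle strictly less than 2π/3 at p. -/
open Real InnerProductGeometry RealInnerProductSpace

/-- If four (or more) distinct rays in `ℝ³` emanate from a common point, given by pairwise
distinct unit direction vectors, then some pair of rays makes an angle strictly less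
than `2π/3`. -/
theorem four_rays_small_angle (d : Fin 4 → EuclideanSpace ℝ (Fin 3))
    (hunit : ∀ i, ‖d i‖ = 1)
    (hdist : ∀ i j, i ≠ j → d i ≠ d j) :
    ∃ i j, i ≠ j ∧ InnerProductGeometry.angle (d i) (d j) < 2 * π / 3 := by
  by_contra h
  push_neg at h
  have key : ∀ i j, i ≠ j → (inner ℝ (d i) (d j) : ℝ) ≤ -(1/2) := by
    intro i j hij
    have hang := h i j hij
    have hcos : Real.cos (InnerProductGeometry.angle (d i) (d j)) ≤ Real.cos (2*π/3) := by
      apply Real.cos_le_cos_of_nonneg_of_le_pi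
      · positivity
      · exact InnerProductGeometry.angle_le_pi _ _
      · exact hang
    rw [InnerProductGeometry.cos_angle, hunit, hunit] at hcos
    have hval : Real.cos (2*π/3) = -(1/2) := by
      have h3 : (2:ℝ)*π/3 = π - π/3 := by ring
      rw [h3, Real.cos_pi_sub, Real.cos_pi_div_three]
    rw [hval] at hcos
    simpa using hcos
  have hdiag : ∀ i, (inner ℝ (d i) (d i) : ℝ) = 1 := by
    intro i
    rw [real_inner_self_eq_norm_sq, hunit]; norm_num
  have hs : (0:ℝ) ≤ (inner ℝ (∑ i, d i) (∑ i, d i) : ℝ) := real_inner_self_nonneg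
  rw [inner_sum] at hs
  simp_rw [sum_inner, Fin.sum_univ_four] at hs
  have h01 := key 0 1 (by decide)
  have h02 := key 0 2 (by decide)
  have h03 := key 0 3 (by decide)
  have h10 := key 1 0 (by decide)
  have h12 := key 1 2 (by decide)
  have h13 := key 1 3 (by decide)
  have h20 := key 2 0 (by decide)
  have h21 := key 2 1 (by decide)
  have h23 := key 2 3 (by decide)
  have h30 := key 3 0 (by decide)
  have h31 := key 3 1 (by decide)
  have h32 := key 3 2 (by decide)
  have e0 := hdiag 0
  have e1 := hdiag 1
  have e2 := hdiag 2
  have e3 := hdiag 3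
  linarith
end

section
/- Let u, v, w be three points in the plane forming a triangle all of whose angles are strictly less than 2π/3, and let s be the Fermat point (the minimizer of d(s,u)+d(s,v)+d(s,w)). Then s is distinct from u, v, w and the three angles ∠(u,s,v), ∠(v,s,w), ∠(w,s,u) each equal 2π/3. -/
open Real EuclideanGeometry
open scoped RealInnerProductSpace

variable {E : Type*} [NormedAddCommGroup E] [InnerProductSpace ℝ E]

lemma hasFDerivAt_dist' (p s : E) (h : s ≠ p) :
    HasFDerivAt (fun x => dist x p) (‖s - p‖⁻¹ • innerSL ℝ (s - p)) s := by
  have hsp : s - p ≠ 0 := sub_ne_zero.2 h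
  have h1 : HasFDerivAt (fun x : E => ‖x - p‖ ^ 2)
      (2 • (innerSL ℝ (s - p))) s := by
    simpa using ((hasFDerivAt_id s).sub_const p).norm_sq
  have h2 : HasFDerivAt (fun x : E => Real.sqrt (‖x - p‖ ^ 2))
      ((1 / (2 * Real.sqrt (‖s - p‖ ^ 2))) • (2 • (innerSL ℝ (s - p)))) s :=
    h1.sqrt (by simpa using pow_ne_zero 2 (norm_ne_zero_iff.2 hsp))
  have heq : (fun x : E => Real.sqrt (‖x - p‖ ^ 2)) = fun x => dist x p := by
    funext x
    rw [Real.sqrt_sq (norm_nonneg _), dist_eq_norm]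
  rw [heq] at h2
  convert h2 using 1
  rw [Real.sqrt_sq (norm_nonneg _)]
  ext y
  simp [smul_smul]
  ring

lemma arccos_neg_half : Real.arccos (-(1/2)) = 2 * π / 3 := by
  have h : Real.cos (2 * π / 3) = -(1/2) := by
    rw [show (2 * π / 3 : ℝ) = π - π/3 by ring, Real.cos_pi_sub, Real.cos_pi_div_three]
  rw [← h, Real.arccos_cos (by positivity) (by nlinarith [pi_pos])]

lemma angle_eq_arccos' (a x b : E) :
    ∠ a x b = Real.arccos (⟪x - a, x - b⟫ / (‖x - a‖ * ‖x - b‖)) := by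
  show InnerProductGeometry.angle (a -ᵥ x) (b -ᵥ x) = _
  rw [vsub_eq_sub, vsub_eq_sub, InnerProductGeometry.angle]
  rw [show a - x = -(x - a) by abel, show b - x = -(x - b) by abel,
    inner_neg_neg, norm_neg, norm_neg]

lemma vertex_angle_ge (a b c : E) (hab : a ≠ b) (hac : a ≠ c)
    (hmin : ∀ x : E, dist a b + dist a c ≤ dist x a + dist x b + dist x c) :
    2 * π / 3 ≤ ∠ b a c := by
  have hb0 : a - b ≠ 0 := sub_ne_zero.2 hab
  have hc0 : a - c ≠ 0 := sub_ne_zero.2 hac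
  set eb : E := ‖a - b‖⁻¹ • (a - b) with heb_def
  set ec : E := ‖a - c‖⁻¹ • (a - c) with hec_def
  have heb : ‖eb‖ = 1 := by
    rw [heb_def, norm_smul, norm_inv, norm_norm, inv_mul_cancel₀ (norm_ne_zero_iff.2 hb0)]
  have hec : ‖ec‖ = 1 := by
    rw [hec_def, norm_smul, norm_inv, norm_norm, inv_mul_cancel₀ (norm_ne_zero_iff.2 hc0)]
  set e : E := eb + ec with he_def
  have hne : ‖e‖ ≤ 1 := by
    by_cases he : e = 0
    · simp [he]
    set h : E := -(‖e‖⁻¹ • e) with hh_def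
    have hh1 : ‖h‖ = 1 := by
      rw [hh_def, norm_neg, norm_smul, norm_inv, norm_norm,
        inv_mul_cancel₀ (norm_ne_zero_iff.2 he)]
    have hγ : HasDerivAt (fun t : ℝ => a + t • h) h 0 := by
      simpa using ((hasDerivAt_id (0:ℝ)).smul_const h).const_add a
    have hF : HasFDerivAt (fun x => dist x b + dist x c)
        (‖a - b‖⁻¹ • innerSL ℝ (a - b) + ‖a - c‖⁻¹ • innerSL ℝ (a - c)) a :=
      (hasFDerivAt_dist' b a hab).add (hasFDerivAt_dist' c a hac)
    have hγ0 : a + (0:ℝ) • h = a := by simp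
    have hφ : HasDerivAt (fun t : ℝ => dist (a + t • h) b + dist (a + t • h) c)
        ((‖a - b‖⁻¹ • innerSL ℝ (a - b) + ‖a - c‖⁻¹ • innerSL ℝ (a - c)) h) 0 := by
      exact HasFDerivAt.comp_hasDerivAt 0 (by rw [hγ0]; exact hF) hγ
    have hval : (‖a - b‖⁻¹ • innerSL ℝ (a - b) + ‖a - c‖⁻¹ • innerSL ℝ (a - c)) h
        = -‖e‖ := by
      have h1 : (‖a - b‖⁻¹ • innerSL ℝ (a - b) + ‖a - c‖⁻¹ • innerSL ℝ (a - c)) h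
          = ⟪e, h⟫ := by
        simp [he_def, heb_def, hec_def, inner_add_left, inner_sub_left, real_inner_smul_left]
      rw [h1, hh_def, inner_neg_right, real_inner_smul_right,
        real_inner_self_eq_norm_sq]
      rw [sq]
      field_simp
    rw [hval] at hφ
    have hslope : Filter.Tendsto (slope (fun t : ℝ => dist (a + t • h) b + dist (a + t • h) c) 0)
        (nhdsWithin 0 (Set.Ioi 0)) (nhds (-‖e‖)) := by
      refine (hasDerivAt_iff_tendsto_slope.1 hφ).mono_left (nhdsWithin_mono 0 ?_)
      intro t ht
      exact ne_of_gt ht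
    have hineq : ∀ᶠ t in nhdsWithin (0:ℝ) (Set.Ioi 0),
        (-1 : ℝ) ≤ slope (fun t : ℝ => dist (a + t • h) b + dist (a + t • h) c) 0 t := by
      refine Filter.eventually_of_mem self_mem_nhdsWithin (fun t ht => ?_)
      have ht0 : (0:ℝ) < t := ht
      have := hmin (a + t • h)
      have hda : dist (a + t • h) a = t := by
        rw [dist_eq_norm, add_sub_cancel_left, norm_smul, Real.norm_eq_abs,
          abs_of_pos ht0, hh1, mul_one]
      rw [slope_def_field, sub_zero, le_div_iff₀ ht0, hγ0]
      linarith
    have := ge_of_tendsto hslope hineq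
    linarith
  have hsq : ‖e‖^2 = 2 + 2 * ⟪eb, ec⟫ := by
    rw [he_def, norm_add_sq_real, heb, hec]; ring
  have key : ⟪eb, ec⟫ ≤ -(1/2) := by nlinarith [norm_nonneg e]
  have hq : ⟪a - b, a - c⟫ / (‖a - b‖ * ‖a - c‖) = ⟪eb, ec⟫ := by
    rw [heb_def, hec_def, real_inner_smul_left, real_inner_smul_right, div_eq_mul_inv, mul_inv]
    ring
  rw [angle_eq_arccos', hq, ← arccos_neg_half, Real.arccos, Real.arccos]
  exact sub_le_sub_left (Real.monotone_arcsin key) _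

lemma angle_of_unit_inner (x a b : E) (ha : x - a ≠ 0) (hb : x - b ≠ 0)
    (h : ⟪‖x - a‖⁻¹ • (x - a), ‖x - b‖⁻¹ • (x - b)⟫ = -(1/2)) : ∠ a x b = 2 * π / 3 := by
  rw [angle_eq_arccos']
  have hq : ⟪x - a, x - b⟫ / (‖x - a‖ * ‖x - b‖)
      = ⟪‖x - a‖⁻¹ • (x - a), ‖x - b‖⁻¹ • (x - b)⟫ := by
    rw [real_inner_smul_left, real_inner_smul_right, div_eq_mul_inv, mul_inv]
    ring
  rw [hq, h, arccos_neg_half]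

lemma inner_neg_half {x y z : E} (hx : ‖x‖ = 1) (hy : ‖y‖ = 1) (hz : ‖z‖ = 1)
    (h : x + y + z = 0) : ⟪x, y⟫ = -(1/2) := by
  have h2 : x + y = -z := by
    have := neg_eq_of_add_eq_zero_left h
    rw [← this]
  have h3 : ‖x + y‖ ^ 2 = 1 := by rw [h2, norm_neg, hz]; norm_num
  have hexp : ‖x + y‖ ^ 2 = ‖x‖ ^ 2 + 2 * ⟪x, y⟫ + ‖y‖ ^ 2 := norm_add_sq_real x y
  rw [hx, hy] at hexp
  linarith

/-- If all angles of a triangle `u v w` in the plane are strictly less than `2π/3` and `s`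
is the Fermat point (a minimizer of the sum of distances to the vertices), then `s` is
distinct from `u`, `v`, `w` and the three angles at `s` all equal `2π/3`. -/
theorem fermat_point_angles (u v w s : EuclideanSpace ℝ (Fin 2))
    (hncol : ¬ Collinear ℝ ({u, v, w} : Set (EuclideanSpace ℝ (Fin 2))))
    (hu : ∠ w u v < 2 * π / 3) (hv : ∠ u v w < 2 * π / 3) (hw : ∠ v w u < 2 * π / 3)
    (hmin : ∀ x : EuclideanSpace ℝ (Fin 2),
      dist s u + dist s v + dist s w ≤ dist x u + dist x v + dist x w) :
    s ≠ u ∧ s ≠ v ∧ s ≠ w ∧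
      ∠ u s v = 2 * π / 3 ∧ ∠ v s w = 2 * π / 3 ∧ ∠ w s u = 2 * π / 3 := by
  have huv : u ≠ v := by rintro rfl; exact hncol (by simpa using collinear_pair ℝ u w)
  have hvw : v ≠ w := by rintro rfl; exact hncol (by simpa using collinear_pair ℝ u v)
  have huw : u ≠ w := by
    rintro rfl
    refine hncol ?_
    have : ({u, v, u} : Set (EuclideanSpace ℝ (Fin 2))) = {u, v} := by
      ext x; simp; tauto
    rw [this]
    exact collinear_pair ℝ u v
  have hsu : s ≠ u := by
    rintro rfl
    have key := vertex_angle_ge s v w huv huw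
      (fun x => by have := hmin x; simp only [dist_self, zero_add] at this; linarith)
    rw [EuclideanGeometry.angle_comm] at hu
    linarith
  have hsv : s ≠ v := by
    rintro rfl
    have key := vertex_angle_ge s u w (Ne.symm huv) hvw
      (fun x => by have := hmin x; simp only [dist_self, add_zero, zero_add] at this; linarith)
    linarith
  have hsw : s ≠ w := by
    rintro rfl
    have key := vertex_angle_ge s u v (Ne.symm huw) (Ne.symm hvw)
      (fun x => by have := hmin x; simp only [dist_self, add_zero, zero_add] at this; linarith)
    rw [EuclideanGeometry.angle_comm] at hw
    linarith
  -- gradient condition at s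
  have hu0 : s - u ≠ 0 := sub_ne_zero.2 hsu
  have hv0 : s - v ≠ 0 := sub_ne_zero.2 hsv
  have hw0 : s - w ≠ 0 := sub_ne_zero.2 hsw
  set eu : EuclideanSpace ℝ (Fin 2) := ‖s - u‖⁻¹ • (s - u) with heu_def
  set ev : EuclideanSpace ℝ (Fin 2) := ‖s - v‖⁻¹ • (s - v) with hev_def
  set ew : EuclideanSpace ℝ (Fin 2) := ‖s - w‖⁻¹ • (s - w) with hew_def
  have hneu : ‖eu‖ = 1 := by
    rw [heu_def, norm_smul, norm_inv, norm_norm, inv_mul_cancel₀ (norm_ne_zero_iff.2 hu0)]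
  have hnev : ‖ev‖ = 1 := by
    rw [hev_def, norm_smul, norm_inv, norm_norm, inv_mul_cancel₀ (norm_ne_zero_iff.2 hv0)]
  have hnew : ‖ew‖ = 1 := by
    rw [hew_def, norm_smul, norm_inv, norm_norm, inv_mul_cancel₀ (norm_ne_zero_iff.2 hw0)]
  have hsum : HasFDerivAt (fun x : EuclideanSpace ℝ (Fin 2) => dist x u + dist x v + dist x w)
      (‖s - u‖⁻¹ • innerSL ℝ (s - u) + ‖s - v‖⁻¹ • innerSL ℝ (s - v)
        + ‖s - w‖⁻¹ • innerSL ℝ (s - w)) s :=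
    ((hasFDerivAt_dist' u s hsu).add (hasFDerivAt_dist' v s hsv)).add
      (hasFDerivAt_dist' w s hsw)
  have hloc : IsLocalMin (fun x : EuclideanSpace ℝ (Fin 2) => dist x u + dist x v + dist x w)
      s := Filter.Eventually.filter_mono le_top (Filter.Eventually.of_forall fun x => hmin x)
  have hL := hloc.hasFDerivAt_eq_zero hsum
  have hzero : eu + ev + ew = 0 := by
    have hy : ∀ y : EuclideanSpace ℝ (Fin 2), ⟪eu + ev + ew, y⟫ = 0 := by
      intro y
      have := DFunLike.congr_fun hL y
      simp only [ContinuousLinearMap.add_apply, ContinuousLinearMap.smul_apply,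
        innerSL_apply_apply, ContinuousLinearMap.zero_apply, smul_eq_mul] at this
      rw [inner_add_left, inner_add_left, heu_def, hev_def, hew_def,
        real_inner_smul_left, real_inner_smul_left, real_inner_smul_left]
      linarith
    exact inner_self_eq_zero.1 (hy (eu + ev + ew))
  have huv2 : ⟪eu, ev⟫ = -(1/2) := inner_neg_half hneu hnev hnew hzero
  have hvw2 : ⟪ev, ew⟫ = -(1/2) := inner_neg_half hnev hnew hneu (by rw [← hzero]; abel)
  have hwu2 : ⟪ew, eu⟫ = -(1/2) := inner_neg_half hnew hneu hnev (by rw [← hzero]; abel)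
  refine ⟨hsu, hsv, hsw, ?_, ?_, ?_⟩
  · exact angle_of_unit_inner s u v hu0 hv0 huv2
  · exact angle_of_unit_inner s v w hv0 hw0 hvw2
  · exact angle_of_unit_inner s w u hw0 hu0 hwu2
end

section
/- For the regular hexagon with vertices a₁=(-1/2, √3/2), b₁=(-1,0), c₁=(-1/2,-√3/2), a₂=(1/2,-√3/2), b₂=(1,0), c₂=(1/2,√3/2), the Steiner minimal tree of the four consecutive vertices {a₁, b₁, c₁, a₂} has length exactly 3 and is achieved by the three hexagon edges [a₁,b₁] ∪ [b₁,c₁] ∪ [c₁,a₂]. -/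
open Real

noncomputable abbrev E2 : Type := EuclideanSpace ℝ (Fin 2)

/-- The union of a finite family of segments in the plane. -/
def segUnion {n : ℕ} (e : Fin n → E2 × E2) : Set E2 :=
  ⋃ i, segment ℝ (e i).1 (e i).2

/-- The total length of a finite family of segments. -/
noncomputable def totalLength {n : ℕ} (e : Fin n → E2 × E2) : ℝ :=
  ∑ i, dist (e i).1 (e i).2

section SteinerAux

noncomputable def V2 (x y : ℝ) : E2 := !₂[x, y]

lemma inner_V2 (x y a b : ℝ) : (inner ℝ (V2 x y) (V2 a b) : ℝ) = x*a + y*b := by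
  rw [PiLp.inner_apply]; simp [V2, Fin.sum_univ_two]; ring

lemma norm_V2 (x y : ℝ) : ‖V2 x y‖ = Real.sqrt (x^2 + y^2) := by
  rw [EuclideanSpace.norm_eq]; simp [V2, Fin.sum_univ_two, sq_abs]

lemma sub_V2 (x y a b : ℝ) : V2 x y - V2 a b = V2 (x-a) (y-b) := by
  ext i; fin_cases i <;> simp [V2]

lemma add_V2 (x y a b : ℝ) : V2 x y + V2 a b = V2 (x+a) (y+b) := by
  ext i; fin_cases i <;> simp [V2]

lemma zero_V2 : (0 : E2) = V2 0 0 := by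
  ext i; fin_cases i <;> simp [V2]

lemma sq3 : Real.sqrt 3 ^ 2 = 3 := Real.sq_sqrt (by norm_num)

lemma norm_V2_le_one (x y : ℝ) (h : x^2 + y^2 ≤ 1) : ‖V2 x y‖ ≤ 1 := by
  rw [norm_V2]
  rw [show (1:ℝ) = Real.sqrt 1 from Real.sqrt_one.symm]
  exact Real.sqrt_le_sqrt h

/-- certificate A -/
noncomputable def uA : Fin 3 → E2 := ![V2 (-1/2) (-(Real.sqrt 3/2)), V2 1 0, V2 (1/2) (Real.sqrt 3/2)]
/-- certificate B -/
noncomputable def uB : Fin 3 → E2 := ![V2 0 (-1), V2 (Real.sqrt 3/2) (-1/2), V2 0 1]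

lemma sum_fin3 (S : Finset (Fin 3)) (f : Fin 3 → E2) :
    ∑ j ∈ S, f j =
      (if 0 ∈ S then f 0 else 0) + (if 1 ∈ S then f 1 else 0) + (if 2 ∈ S then f 2 else 0) := by
  have : ∑ j ∈ S, f j = ∑ j ∈ Finset.univ, if j ∈ S then f j else 0 := by
    rw [Finset.sum_ite_mem, Finset.univ_inter]
  rw [this, Fin.sum_univ_three]

lemma certA (S : Finset (Fin 3)) (hS : S ≠ {1, 2}) : ‖∑ j ∈ S, uA j‖ ≤ 1 := by
  rw [sum_fin3]
  by_cases h0 : (0 : Fin 3) ∈ S <;> by_cases h1 : (1 : Fin 3) ∈ S <;>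
    by_cases h2 : (2 : Fin 3) ∈ S <;>
    simp only [h0, h1, h2, if_true, if_false, uA, Matrix.cons_val_zero, Matrix.cons_val_one,
      Matrix.head_cons, Matrix.cons_val_two, Matrix.tail_cons, add_zero, zero_add]
  · -- {0,1,2}
    rw [add_V2, add_V2]; apply norm_V2_le_one; nlinarith [sq3]
  · -- {0,1}
    rw [add_V2]; apply norm_V2_le_one; nlinarith [sq3]
  · -- {0,2}
    rw [add_V2]; apply norm_V2_le_one; nlinarith [sq3]
  · -- {0}
    apply norm_V2_le_one; nlinarith [sq3]
  · -- {1,2}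
    exact absurd (by ext j; fin_cases j <;> simp [h0, h1, h2]) hS
  · apply norm_V2_le_one; nlinarith [sq3]
  · apply norm_V2_le_one; nlinarith [sq3]
  · rw [zero_V2]; apply norm_V2_le_one; norm_num

lemma certB (S : Finset (Fin 3)) (hS : S ≠ {0, 1}) : ‖∑ j ∈ S, uB j‖ ≤ 1 := by
  rw [sum_fin3]
  by_cases h0 : (0 : Fin 3) ∈ S <;> by_cases h1 : (1 : Fin 3) ∈ S <;>
    by_cases h2 : (2 : Fin 3) ∈ S <;>
    simp only [h0, h1, h2, if_true, if_false, uB, Matrix.cons_val_zero, Matrix.cons_val_one,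
      Matrix.head_cons, Matrix.cons_val_two, Matrix.tail_cons, add_zero, zero_add]
  · rw [add_V2, add_V2]; apply norm_V2_le_one; nlinarith [sq3]
  · exact absurd (by ext j; fin_cases j <;> simp [h0, h1, h2]) hS
  · rw [add_V2]; apply norm_V2_le_one; nlinarith [sq3]
  · apply norm_V2_le_one; nlinarith [sq3]
  · rw [add_V2]; apply norm_V2_le_one; nlinarith [sq3]
  · apply norm_V2_le_one; nlinarith [sq3]
  · apply norm_V2_le_one; nlinarith [sq3]
  · rw [zero_V2]; apply norm_V2_le_one; norm_num


lemma dist_V2 (x y a b : ℝ) : dist (V2 x y) (V2 a b) = Real.sqrt ((x-a)^2 + (y-b)^2) := by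
  rw [EuclideanSpace.dist_eq]
  congr 1
  simp [V2, Fin.sum_univ_two, Real.dist_eq, sq_abs]

lemma isConnected_seg (a b : E2) : IsConnected (segment ℝ a b) :=
  ⟨⟨a, left_mem_segment ℝ a b⟩, (convex_segment a b).isPreconnected⟩


open Classical in

noncomputable def nxt (F : Finset ℝ) (c t : ℝ) : ℝ :=
  if h : (F.filter (fun s => t < s ∧ s ≤ c)).Nonempty
  then (F.filter (fun s => t < s ∧ s ≤ c)).min' h else c

noncomputable def prv (F : Finset ℝ) (c t : ℝ) : ℝ :=
  if h : (F.filter (fun s => s < t ∧ c ≤ s)).Nonempty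
  then (F.filter (fun s => s < t ∧ c ≤ s)).max' h else c

lemma nxt_ne (F : Finset ℝ) (c t : ℝ) (hc : c ∈ F) (ht : t < c) :
    (F.filter (fun s => t < s ∧ s ≤ c)).Nonempty :=
  ⟨c, Finset.mem_filter.2 ⟨hc, ht, le_refl c⟩⟩

lemma nxt_spec (F : Finset ℝ) (c t : ℝ) (hc : c ∈ F) (ht : t < c) :
    nxt F c t ∈ F ∧ t < nxt F c t ∧ nxt F c t ≤ c := by
  rw [nxt, dif_pos (nxt_ne F c t hc ht)]
  have := (F.filter (fun s => t < s ∧ s ≤ c)).min'_mem (nxt_ne F c t hc ht)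
  rw [Finset.mem_filter] at this
  exact this

lemma nxt_min (F : Finset ℝ) (c t : ℝ) (hc : c ∈ F) (ht : t < c) {s : ℝ}
    (hs : s ∈ F) (h1 : t < s) (h2 : s ≤ c) : nxt F c t ≤ s := by
  rw [nxt, dif_pos (nxt_ne F c t hc ht)]
  exact Finset.min'_le _ _ (Finset.mem_filter.2 ⟨hs, h1, h2⟩)

lemma prv_ne (F : Finset ℝ) (c t : ℝ) (hc : c ∈ F) (ht : c < t) :
    (F.filter (fun s => s < t ∧ c ≤ s)).Nonempty :=
  ⟨c, Finset.mem_filter.2 ⟨hc, ht, le_refl c⟩⟩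

lemma prv_spec (F : Finset ℝ) (c t : ℝ) (hc : c ∈ F) (ht : c < t) :
    prv F c t ∈ F ∧ prv F c t < t ∧ c ≤ prv F c t := by
  rw [prv, dif_pos (prv_ne F c t hc ht)]
  have := (F.filter (fun s => s < t ∧ c ≤ s)).max'_mem (prv_ne F c t hc ht)
  rw [Finset.mem_filter] at this
  exact this

lemma prv_max (F : Finset ℝ) (c t : ℝ) (hc : c ∈ F) (ht : c < t) {s : ℝ}
    (hs : s ∈ F) (h1 : s < t) (h2 : c ≤ s) : s ≤ prv F c t := by
  rw [prv, dif_pos (prv_ne F c t hc ht)]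
  exact Finset.le_max' _ _ (Finset.mem_filter.2 ⟨hs, h1, h2⟩)

/-- gap-sum lemma, below side -/
lemma gaps_lt : ∀ (N : ℕ) (F : Finset ℝ) (c m : ℝ), c ∈ F → m ≤ c → (∀ t ∈ F, m ≤ t) →
    (F.filter (· < c)).card ≤ N →
    ∑ t ∈ F.filter (· < c), (nxt F c t - t) ≤ c - m := by
  intro N
  induction N with
  | zero =>
    intro F c m hc hm hmF hcard
    rw [Nat.le_zero, Finset.card_eq_zero] at hcard
    rw [hcard, Finset.sum_empty]
    linarith
  | succ N ih =>
    intro F c m hc hm hmF hcard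
    rcases Finset.eq_empty_or_nonempty (F.filter (· < c)) with he | hne
    · rw [he, Finset.sum_empty]; linarith
    · set a := (F.filter (· < c)).min' hne with ha
      have haF : a ∈ F.filter (· < c) := (F.filter (· < c)).min'_mem hne
      have haF' : a ∈ F := (Finset.mem_filter.1 haF).1
      have hac : a < c := (Finset.mem_filter.1 haF).2
      set b := nxt F c a with hb
      obtain ⟨hbF, hab, hbc⟩ := nxt_spec F c a hc hac
      set F' := F.erase a with hF'
      have hcF' : c ∈ F' := Finset.mem_erase.2 ⟨ne_of_gt hac, hc⟩
      have hfilter : F'.filter (· < c) = (F.filter (· < c)).erase a := by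
        ext t
        simp only [hF', Finset.mem_filter, Finset.mem_erase]
        tauto
      have hbF'le : ∀ t ∈ F', b ≤ t := by
        intro t htF'
        obtain ⟨hta, htF⟩ := Finset.mem_erase.1 htF'
        rcases le_or_gt t c with h1 | h1
        · rcases lt_trichotomy t a with h2 | h2 | h2
          · exact absurd ((F.filter (· < c)).min'_le t
              (Finset.mem_filter.2 ⟨htF, lt_of_lt_of_le h2 (le_of_lt hac)⟩)) (by rw [← ha]; linarith)
          · exact absurd h2 hta
          · exact nxt_min F c a hc hac htF h2 h1
        · linarith
      have hnxt_eq : ∀ t ∈ F'.filter (· < c), nxt F' c t = nxt F c t := by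
        intro t htf
        obtain ⟨htF', htc⟩ := Finset.mem_filter.1 htf
        obtain ⟨hta, htF⟩ := Finset.mem_erase.1 htF'
        have : F'.filter (fun s => t < s ∧ s ≤ c) = F.filter (fun s => t < s ∧ s ≤ c) := by
          ext s
          simp only [hF', Finset.mem_filter, Finset.mem_erase]
          constructor
          · tauto
          · rintro ⟨hsF, hts, hsc⟩
            refine ⟨⟨?_, hsF⟩, hts, hsc⟩
            rintro rfl
            have := hbF'le t htF'  -- b ≤ t
            have : a < t := lt_of_lt_of_le hab (hbF'le t htF')
            linarith
        rw [nxt, nxt, this]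
      have hcard' : (F'.filter (· < c)).card ≤ N := by
        rw [hfilter, Finset.card_erase_of_mem haF]
        omega
      have ihx := ih F' c b hcF' hbc hbF'le hcard'
      have hsum : ∑ t ∈ F.filter (· < c), (nxt F c t - t)
          = (b - a) + ∑ t ∈ (F.filter (· < c)).erase a, (nxt F c t - t) :=
        (Finset.add_sum_erase _ _ haF).symm
      rw [hsum, ← hfilter]
      have : ∑ t ∈ F'.filter (· < c), (nxt F c t - t)
          = ∑ t ∈ F'.filter (· < c), (nxt F' c t - t) :=
        Finset.sum_congr rfl (fun t ht => by rw [hnxt_eq t ht])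
      rw [this]
      have hma : m ≤ a := hmF a haF'
      linarith

/-- gap-sum lemma, above side -/
lemma gaps_gt : ∀ (N : ℕ) (F : Finset ℝ) (c M : ℝ), c ∈ F → c ≤ M → (∀ t ∈ F, t ≤ M) →
    (F.filter (c < ·)).card ≤ N →
    ∑ t ∈ F.filter (c < ·), (t - prv F c t) ≤ M - c := by
  intro N
  induction N with
  | zero =>
    intro F c M hc hM hMF hcard
    rw [Nat.le_zero, Finset.card_eq_zero] at hcard
    rw [hcard, Finset.sum_empty]
    linarith
  | succ N ih =>
    intro F c M hc hM hMF hcard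
    rcases Finset.eq_empty_or_nonempty (F.filter (c < ·)) with he | hne
    · rw [he, Finset.sum_empty]; linarith
    · set a := (F.filter (c < ·)).max' hne with ha
      have haF : a ∈ F.filter (c < ·) := (F.filter (c < ·)).max'_mem hne
      have haF' : a ∈ F := (Finset.mem_filter.1 haF).1
      have hac : c < a := (Finset.mem_filter.1 haF).2
      set b := prv F c a with hb
      obtain ⟨hbF, hab, hbc⟩ := prv_spec F c a hc hac
      set F' := F.erase a with hF'
      have hcF' : c ∈ F' := Finset.mem_erase.2 ⟨ne_of_lt hac, hc⟩
      have hfilter : F'.filter (c < ·) = (F.filter (c < ·)).erase a := by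
        ext t
        simp only [hF', Finset.mem_filter, Finset.mem_erase]
        tauto
      have hbF'le : ∀ t ∈ F', t ≤ b := by
        intro t htF'
        obtain ⟨hta, htF⟩ := Finset.mem_erase.1 htF'
        rcases le_or_gt c t with h1 | h1
        · rcases lt_trichotomy a t with h2 | h2 | h2
          · exact absurd ((F.filter (c < ·)).le_max' t
              (Finset.mem_filter.2 ⟨htF, lt_of_le_of_lt ((le_of_lt hac)) h2⟩)) (by rw [← ha]; linarith)
          · exact absurd h2.symm hta
          · exact prv_max F c a hc hac htF h2 h1
        · linarith
      have hprv_eq : ∀ t ∈ F'.filter (c < ·), prv F' c t = prv F c t := by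
        intro t htf
        obtain ⟨htF', htc⟩ := Finset.mem_filter.1 htf
        obtain ⟨hta, htF⟩ := Finset.mem_erase.1 htF'
        have : F'.filter (fun s => s < t ∧ c ≤ s) = F.filter (fun s => s < t ∧ c ≤ s) := by
          ext s
          simp only [hF', Finset.mem_filter, Finset.mem_erase]
          constructor
          · tauto
          · rintro ⟨hsF, hts, hsc⟩
            refine ⟨⟨?_, hsF⟩, hts, hsc⟩
            rintro rfl
            have : t < a := lt_of_le_of_lt (hbF'le t htF') hab
            linarith
        rw [prv, prv, this]
      have hcard' : (F'.filter (c < ·)).card ≤ N := by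
        rw [hfilter, Finset.card_erase_of_mem haF]
        omega
      have ihx := ih F' c b hcF' hbc hbF'le hcard'
      have hsum : ∑ t ∈ F.filter (c < ·), (t - prv F c t)
          = (a - b) + ∑ t ∈ (F.filter (c < ·)).erase a, (t - prv F c t) :=
        (Finset.add_sum_erase _ _ haF).symm
      rw [hsum, ← hfilter]
      have : ∑ t ∈ F'.filter (c < ·), (t - prv F c t)
          = ∑ t ∈ F'.filter (c < ·), (t - prv F' c t) :=
        Finset.sum_congr rfl (fun t ht => by rw [hprv_eq t ht])
      rw [this]
      have hma : a ≤ M := hMF a haF'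
      linarith

lemma tree_lower_bound {α : Type*} [DecidableEq α] (V : Finset α) (φ : α → E2) (par : α → α)
    (ht : α → ℕ) (r : α) (hpar : ∀ v ∈ V, par v ∈ V) (hparr : par r = r)
    (hdec : ∀ v ∈ V, v ≠ r → ht (par v) < ht v)
    (tm : Fin 3 → α) (htV : ∀ j, tm j ∈ V)
    (hφr : φ r = V2 (1/2) (-(Real.sqrt 3/2)))
    (hφ0 : φ (tm 0) = V2 (-1/2) (Real.sqrt 3/2))
    (hφ1 : φ (tm 1) = V2 (-1) 0)
    (hφ2 : φ (tm 2) = V2 (-1/2) (-(Real.sqrt 3/2))) :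
    3 ≤ ∑ v ∈ V, dist (φ v) (φ (par v)) := by
  classical
  -- every vertex reaches the root
  have hreach' : ∀ (n : ℕ), ∀ v ∈ V, ht v ≤ n → ∃ k, par^[k] v = r := by
    intro n
    induction n with
    | zero =>
      intro v hv hn
      by_cases hvr : v = r
      · exact ⟨0, hvr⟩
      · exact absurd (hdec v hv hvr) (by omega)
    | succ n ihn =>
      intro v hv hn
      by_cases hvr : v = r
      · exact ⟨0, hvr⟩
      · obtain ⟨k, hk⟩ := ihn (par v) (hpar v hv) (by have := hdec v hv hvr; omega)
        exact ⟨k + 1, by rw [Function.iterate_succ_apply, hk]⟩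
  have hrch : ∀ j : Fin 3, ∃ k, par^[k] (tm j) = r :=
    fun j => hreach' (ht (tm j)) (tm j) (htV j) le_rfl
  set K : Fin 3 → ℕ := fun j => Nat.find (hrch j) with hK
  have hKspec : ∀ j, par^[K j] (tm j) = r := fun j => Nat.find_spec (hrch j)
  have hKmin : ∀ j, ∀ k < K j, par^[k] (tm j) ≠ r := fun j k hk => Nat.find_min (hrch j) hk
  have hKge : ∀ j k, K j ≤ k → par^[k] (tm j) = r := by
    intro j k hk
    obtain ⟨m, rfl⟩ := Nat.exists_eq_add_of_le hk
    rw [add_comm, Function.iterate_add_apply, hKspec j, Function.iterate_fixed hparr]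
  have horbV : ∀ (j : Fin 3) (k : ℕ), par^[k] (tm j) ∈ V := by
    intro j k
    induction k with
    | zero => exact htV j
    | succ k ihk => rw [Function.iterate_succ_apply']; exact hpar _ ihk
  -- injectivity of the orbit before reaching r
  have hinj : ∀ (j : Fin 3), ∀ a < K j, ∀ b < K j, par^[a] (tm j) = par^[b] (tm j) → a = b := by
    have key : ∀ (j : Fin 3), ∀ a b, a < b → b < K j → par^[a] (tm j) ≠ par^[b] (tm j) := by
      intro j a b hab hbK heq
      have hper : ∀ i : ℕ, par^[a + i * (b - a)] (tm j) = par^[a] (tm j) := by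
        intro i
        induction i with
        | zero => simp
        | succ i ihi =>
          obtain ⟨m, hm⟩ : ∃ m, i * (b - a) = m := ⟨_, rfl⟩
          have : a + (i + 1) * (b - a) = (b - a) + (a + i * (b - a)) := by
            rw [Nat.succ_mul, hm]; omega
          rw [this, Function.iterate_add_apply, ihi, ← Function.iterate_add_apply]
          rw [show b - a + a = b by omega]
          exact heq.symm
      have hbig : K j ≤ a + K j * (b - a) := by
        have : 1 ≤ b - a := by omega
        calc K j ≤ a + K j * 1 := by omega
        _ ≤ a + K j * (b - a) := by
            have := Nat.mul_le_mul_left (K j) this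
            omega
      exact hKmin j a (by omega) (by rw [← hper (K j), hKge j _ hbig])
    intro j a ha b hb heq
    rcases lt_trichotomy a b with h | h | h
    · exact absurd heq (key j a b h hb)
    · exact h
    · exact absurd heq.symm (key j b a h ha)
  set O : Fin 3 → Finset α := fun j => (Finset.range (K j)).image (fun k => par^[k] (tm j)) with hO
  have hOV : ∀ j, O j ⊆ V := by
    intro j v hv
    obtain ⟨k, _, rfl⟩ := Finset.mem_image.1 hv
    exact horbV j k
  have hOr : ∀ j, r ∉ O j := by
    intro j hr
    obtain ⟨k, hk, hkr⟩ := Finset.mem_image.1 hr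
    exact hKmin j k (Finset.mem_range.1 hk) hkr
  set S : α → Finset (Fin 3) := fun v => Finset.univ.filter (fun j => v ∈ O j) with hS
  -- telescoping
  have htel : ∀ j, ∑ v ∈ O j, (φ (par v) - φ v) = φ r - φ (tm j) := by
    intro j
    rw [hO]
    rw [Finset.sum_image (by
      intro a haR b hbR heq
      exact hinj j a (Finset.mem_range.1 haR) b (Finset.mem_range.1 hbR) heq)]
    have : ∀ k ∈ Finset.range (K j),
        φ (par (par^[k] (tm j))) - φ (par^[k] (tm j))
          = φ (par^[k+1] (tm j)) - φ (par^[k] (tm j)) := by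
      intro k _
      rw [Function.iterate_succ_apply']
    rw [Finset.sum_congr rfl this, Finset.sum_range_sub (fun k => φ (par^[k] (tm j))), hKspec]
    simp
  -- main identity
  have hid : ∀ u : Fin 3 → E2,
      ∑ v ∈ V, (inner ℝ (∑ j ∈ S v, u j) (φ (par v) - φ v) : ℝ)
        = ∑ j : Fin 3, (inner ℝ (u j) (φ r - φ (tm j)) : ℝ) := by
    intro u
    have step1 : ∀ v, (inner ℝ (∑ j ∈ S v, u j) (φ (par v) - φ v) : ℝ)
        = ∑ j ∈ S v, (inner ℝ (u j) (φ (par v) - φ v) : ℝ) := by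
      intro v
      rw [sum_inner]
    rw [Finset.sum_congr rfl (fun v _ => step1 v)]
    have step2 : ∀ v, ∑ j ∈ S v, (inner ℝ (u j) (φ (par v) - φ v) : ℝ)
        = ∑ j : Fin 3, if v ∈ O j then (inner ℝ (u j) (φ (par v) - φ v) : ℝ) else 0 := by
      intro v
      rw [hS, Finset.sum_filter]
    rw [Finset.sum_congr rfl (fun v _ => step2 v), Finset.sum_comm]
    apply Finset.sum_congr rfl
    intro j _
    rw [← Finset.sum_filter]
    have : V.filter (fun v => v ∈ O j) = O j := by
      rw [Finset.filter_mem_eq_inter, Finset.inter_eq_right.2 (hOV j)]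
    rw [this, ← inner_sum, htel j]
  -- comparability / laminarity
  have hcomp : ∀ v w : α, (∃ j, j ∈ S v ∧ j ∈ S w) → S v ⊆ S w ∨ S w ⊆ S v := by
    have key : ∀ (j : Fin 3) (a b : ℕ), a ≤ b → b < K j →
        S (par^[a] (tm j)) ⊆ S (par^[b] (tm j)) := by
      intro j a b hab hbK j' hj'
      rw [hS, Finset.mem_filter] at hj' ⊢
      refine ⟨Finset.mem_univ _, ?_⟩
      obtain ⟨c, hcR, hc⟩ := Finset.mem_image.1 hj'.2
      rw [Finset.mem_range] at hcR
      have hw : par^[b] (tm j) = par^[(b - a) + c] (tm j') := by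
        have h1 : par^[b] (tm j) = par^[b - a] (par^[a] (tm j)) := by
          rw [← Function.iterate_add_apply, show b - a + a = b by omega]
        rw [h1, ← hc, ← Function.iterate_add_apply]
      have hwr : par^[b] (tm j) ≠ r := hKmin j b hbK
      have hlt : (b - a) + c < K j' := by
        by_contra hge
        exact hwr (by rw [hw, hKge j' _ (by omega)])
      exact Finset.mem_image.2 ⟨(b - a) + c, Finset.mem_range.2 hlt, hw.symm⟩
    intro v w ⟨j, hjv, hjw⟩
    rw [hS, Finset.mem_filter] at hjv hjw
    obtain ⟨a, haR, ha⟩ := Finset.mem_image.1 hjv.2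
    obtain ⟨b, hbR, hb⟩ := Finset.mem_image.1 hjw.2
    rw [Finset.mem_range] at haR hbR
    rcases le_total a b with h | h
    · left; rw [← ha, ← hb]; exact key j a b h hbR
    · right; rw [← ha, ← hb]; exact key j b a h haR
  -- the generic bound
  have main : ∀ u : Fin 3 → E2, (∀ v ∈ V, ‖∑ j ∈ S v, u j‖ ≤ 1) →
      ∑ j : Fin 3, (inner ℝ (u j) (φ r - φ (tm j)) : ℝ) ≤ ∑ v ∈ V, dist (φ v) (φ (par v)) := by
    intro u hu
    rw [← hid u]
    apply Finset.sum_le_sum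
    intro v hv
    calc (inner ℝ (∑ j ∈ S v, u j) (φ (par v) - φ v) : ℝ)
        ≤ ‖∑ j ∈ S v, u j‖ * ‖φ (par v) - φ v‖ := real_inner_le_norm _ _
      _ ≤ 1 * ‖φ (par v) - φ v‖ := by
          apply mul_le_mul_of_nonneg_right (hu v hv) (norm_nonneg _)
      _ = dist (φ v) (φ (par v)) := by rw [one_mul, ← dist_eq_norm, dist_comm]
  -- case split
  by_cases hcase : ∀ v ∈ V, S v ≠ ({1, 2} : Finset (Fin 3))
  · -- certificate A
    have hval : ∑ j : Fin 3, (inner ℝ (uA j) (φ r - φ (tm j)) : ℝ) = 3 := by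
      rw [Fin.sum_univ_three, hφr, hφ0, hφ1, hφ2]
      simp only [uA, Matrix.cons_val_zero, Matrix.cons_val_one, Matrix.head_cons,
        Matrix.cons_val_two, Matrix.tail_cons]
      rw [sub_V2, sub_V2, sub_V2, inner_V2, inner_V2, inner_V2]
      nlinarith [sq3]
    rw [← hval]
    exact main uA (fun v hv => certA (S v) (hcase v hv))
  · -- certificate B
    push_neg at hcase
    obtain ⟨v₀, hv₀V, hv₀⟩ := hcase
    have hB : ∀ v ∈ V, S v ≠ ({0, 1} : Finset (Fin 3)) := by
      intro v _ hSv
      have h1v : (1 : Fin 3) ∈ S v := by rw [hSv]; decide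
      have h1v₀ : (1 : Fin 3) ∈ S v₀ := by rw [hv₀]; decide
      rcases hcomp v v₀ ⟨1, h1v, h1v₀⟩ with h | h
      · rw [hSv, hv₀] at h
        exact absurd (h (by decide : (0 : Fin 3) ∈ ({0,1} : Finset (Fin 3)))) (by decide)
      · rw [hSv, hv₀] at h
        exact absurd (h (by decide : (2 : Fin 3) ∈ ({1,2} : Finset (Fin 3)))) (by decide)
    have hval : ∑ j : Fin 3, (inner ℝ (uB j) (φ r - φ (tm j)) : ℝ) = 2 * Real.sqrt 3 := by
      rw [Fin.sum_univ_three, hφr, hφ0, hφ1, hφ2]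
      simp only [uB, Matrix.cons_val_zero, Matrix.cons_val_one, Matrix.head_cons,
        Matrix.cons_val_two, Matrix.tail_cons]
      rw [sub_V2, sub_V2, sub_V2, inner_V2, inner_V2, inner_V2]
      nlinarith [sq3]
    have h3 : (3 : ℝ) ≤ 2 * Real.sqrt 3 := by nlinarith [sq3, Real.sqrt_nonneg 3]
    calc (3:ℝ) ≤ 2 * Real.sqrt 3 := h3
      _ = ∑ j : Fin 3, (inner ℝ (uB j) (φ r - φ (tm j)) : ℝ) := hval.symm
      _ ≤ _ := main uB (fun v hv => certB (S v) (hB v hv))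

/-- BFS reachability in the intersection graph of the segments. -/
def reaches {n : ℕ} (touch : Fin n → Fin n → Prop) (i₀ : Fin n) : ℕ → Fin n → Prop
  | 0, j => j = i₀
  | (k+1), j => ∃ i, reaches touch i₀ k i ∧ touch i j

lemma lower_bound {n : ℕ} (e : Fin n → E2 × E2) (hconn : IsConnected (segUnion e))
    (h0 : V2 (-1/2) (Real.sqrt 3/2) ∈ segUnion e)
    (h1 : V2 (-1) 0 ∈ segUnion e)
    (h2 : V2 (-1/2) (-(Real.sqrt 3/2)) ∈ segUnion e)
    (h3 : V2 (1/2) (-(Real.sqrt 3/2)) ∈ segUnion e) :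
    3 ≤ totalLength e := by
  classical
  set pt : Fin n → ℝ → E2 := fun i t => AffineMap.lineMap (e i).1 (e i).2 t with hpt
  have hseg : ∀ i, segment ℝ (e i).1 (e i).2 = pt i '' Set.Icc 0 1 := by
    intro i; rw [hpt, segment_eq_image_lineMap]
  have hsegme : ∀ (x : E2) (i : Fin n), x ∈ segment ℝ (e i).1 (e i).2 →
      ∃ t, 0 ≤ t ∧ t ≤ 1 ∧ pt i t = x := by
    intro x i hx
    rw [hseg] at hx
    obtain ⟨t, ht, rfl⟩ := hx
    exact ⟨t, ht.1, ht.2, rfl⟩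
  have hsegcl : ∀ i, IsClosed (segment ℝ (e i).1 (e i).2) := by
    intro i
    rw [hseg]
    exact (isCompact_Icc.image (AffineMap.lineMap_continuous)).isClosed
  set touch : Fin n → Fin n → Prop :=
    fun i j => (segment ℝ (e i).1 (e i).2 ∩ segment ℝ (e j).1 (e j).2).Nonempty with htouch
  have htouch_self : ∀ i, touch i i := fun i => ⟨(e i).1, left_mem_segment ℝ _ _,
    left_mem_segment ℝ _ _⟩
  -- the segment containing the root terminal a₂
  obtain ⟨si₀, hsi₀⟩ := Set.mem_iUnion.1 h3
  set i₀ : Fin n := si₀ with hi₀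
  obtain ⟨τ₀, hτ₀0, hτ₀1, hτ₀⟩ := hsegme _ i₀ hsi₀
  -- BFS connectivity
  have hmono : ∀ k j, reaches touch i₀ k j → reaches touch i₀ (k+1) j :=
    fun k j h => ⟨j, h, htouch_self j⟩
  have hall : ∀ j : Fin n, ∃ k, reaches touch i₀ k j := by
    by_contra hcon
    push_neg at hcon
    obtain ⟨j₀, hj₀⟩ := hcon
    set C : Set (Fin n) := {j | ∃ k, reaches touch i₀ k j} with hC
    have hi₀C : i₀ ∈ C := ⟨0, rfl⟩
    have hstep : ∀ i j, i ∈ C → touch i j → j ∈ C := by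
      rintro i j ⟨k, hk⟩ ht
      exact ⟨k+1, ⟨i, hk, ht⟩⟩
    set U₁ : Set E2 := ⋃ j ∈ C, segment ℝ (e j).1 (e j).2 with hU₁
    set U₂ : Set E2 := ⋃ j ∈ Cᶜ, segment ℝ (e j).1 (e j).2 with hU₂
    have hU₁cl : IsClosed U₁ := (Set.toFinite C).isClosed_biUnion (fun j _ => hsegcl j)
    have hU₂cl : IsClosed U₂ := (Set.toFinite Cᶜ).isClosed_biUnion (fun j _ => hsegcl j)
    have hcover : segUnion e ⊆ U₁ ∪ U₂ := by
      intro x hx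
      obtain ⟨j, hj⟩ := Set.mem_iUnion.1 hx
      by_cases hjC : j ∈ C
      · exact Or.inl (Set.mem_biUnion hjC hj)
      · exact Or.inr (Set.mem_biUnion hjC hj)
    have hdisj : Disjoint U₁ U₂ := by
      rw [Set.disjoint_left]
      rintro x hx1 hx2
      obtain ⟨j, hjC, hj⟩ := Set.mem_iUnion₂.1 hx1
      obtain ⟨j', hj'C, hj'⟩ := Set.mem_iUnion₂.1 hx2
      exact hj'C (hstep j j' hjC ⟨x, hj, hj'⟩)
    have hclosed : IsClosed (segUnion e) := by
      have : segUnion e = ⋃ j ∈ (Set.univ : Set (Fin n)), segment ℝ (e j).1 (e j).2 := by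
        simp [segUnion]
      rw [this]
      exact (Set.toFinite _).isClosed_biUnion (fun j _ => hsegcl j)
    rcases (isPreconnected_iff_subset_of_fully_disjoint_closed hclosed).1
        hconn.isPreconnected U₁ U₂ hU₁cl hU₂cl hcover hdisj with hsub | hsub
    · have : (e j₀).1 ∈ U₁ := hsub (Set.mem_iUnion.2 ⟨j₀, left_mem_segment ℝ _ _⟩)
      obtain ⟨j, hjC, hj⟩ := Set.mem_iUnion₂.1 this
      exact hj₀ ((hstep j j₀ hjC ⟨(e j₀).1, hj, left_mem_segment ℝ _ _⟩).choose)
        ((hstep j j₀ hjC ⟨(e j₀).1, hj, left_mem_segment ℝ _ _⟩).choose_spec)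
    · have : (e i₀).1 ∈ U₂ := hsub (Set.mem_iUnion.2 ⟨i₀, left_mem_segment ℝ _ _⟩)
      obtain ⟨j, hjC, hj⟩ := Set.mem_iUnion₂.1 this
      exact hjC (hstep i₀ j hi₀C ⟨(e i₀).1, left_mem_segment ℝ _ _, hj⟩)
  set d : Fin n → ℕ := fun j => Nat.find (hall j) with hd
  have hdspec : ∀ j, reaches touch i₀ (d j) j := fun j => Nat.find_spec (hall j)
  have hd0 : d i₀ = 0 := Nat.eq_zero_of_le_zero (Nat.find_le rfl)
  -- choose parents in the BFS tree together with a common point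
  have key : ∀ j : Fin n, ∃ i s u, (0 ≤ s ∧ s ≤ 1 ∧ 0 ≤ u ∧ u ≤ 1 ∧ pt i s = pt j u) ∧
      (j ≠ i₀ → d i < d j) ∧ (j = i₀ → i = i₀ ∧ s = τ₀ ∧ u = τ₀) := by
    intro j
    by_cases hj : j = i₀
    · subst hj
      exact ⟨j, τ₀, τ₀, ⟨hτ₀0, hτ₀1, hτ₀0, hτ₀1, rfl⟩, fun h => absurd rfl h,
        fun _ => ⟨rfl, rfl, rfl⟩⟩
    · have hdj : d j ≠ 0 := by
        intro h0'
        have := hdspec j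
        rw [h0'] at this
        exact hj this
      obtain ⟨k, hk⟩ := Nat.exists_eq_succ_of_ne_zero hdj
      have hrs := hdspec j
      rw [hk] at hrs
      obtain ⟨i, hri, htij⟩ := hrs
      obtain ⟨x, hxi, hxj⟩ := htij
      obtain ⟨s, hs0, hs1, hsx⟩ := hsegme x i hxi
      obtain ⟨u, hu0, hu1, hux⟩ := hsegme x j hxj
      refine ⟨i, s, u, ⟨hs0, hs1, hu0, hu1, by rw [hsx, hux]⟩, fun _ => ?_, fun h => absurd h hj⟩
      have : d i ≤ k := Nat.find_le hri
      omega
  choose σ ρ τ hkey using key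
  have hρ0 : ∀ j, 0 ≤ ρ j := fun j => (hkey j).1.1
  have hρ1 : ∀ j, ρ j ≤ 1 := fun j => (hkey j).1.2.1
  have hτ0 : ∀ j, 0 ≤ τ j := fun j => (hkey j).1.2.2.1
  have hτ1 : ∀ j, τ j ≤ 1 := fun j => (hkey j).1.2.2.2.1
  have hw : ∀ j, pt (σ j) (ρ j) = pt j (τ j) := fun j => (hkey j).1.2.2.2.2
  have hdσ : ∀ j, j ≠ i₀ → d (σ j) < d j := fun j h => (hkey j).2.1 h
  have hτi₀ : τ i₀ = τ₀ := ((hkey i₀).2.2 rfl).2.2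
  -- terminals
  obtain ⟨sc0, hsc0⟩ := Set.mem_iUnion.1 h0
  obtain ⟨sc1, hsc1⟩ := Set.mem_iUnion.1 h1
  obtain ⟨sc2, hsc2⟩ := Set.mem_iUnion.1 h2
  set c : Fin 3 → Fin n := ![sc0, sc1, sc2] with hc
  obtain ⟨θ0, hθ00, hθ01, hθ0x⟩ := hsegme _ sc0 hsc0
  obtain ⟨θ1, hθ10, hθ11, hθ1x⟩ := hsegme _ sc1 hsc1
  obtain ⟨θ2, hθ20, hθ21, hθ2x⟩ := hsegme _ sc2 hsc2
  set θ : Fin 3 → ℝ := ![θ0, θ1, θ2] with hθ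
  have hθIcc : ∀ j, 0 ≤ θ j ∧ θ j ≤ 1 := by
    intro j
    fin_cases j <;> simp [hθ, hθ00, hθ01, hθ10, hθ11, hθ20, hθ21]
  -- marked points
  set M : Fin n → Finset ℝ := fun i => insert (τ i)
    (((Finset.univ.filter (fun j => j ≠ i₀ ∧ σ j = i)).image ρ) ∪
     ((Finset.univ.filter (fun j : Fin 3 => c j = i)).image θ)) with hM
  have hMτ : ∀ i, τ i ∈ M i := fun i => Finset.mem_insert_self _ _
  have hMρ : ∀ j, j ≠ i₀ → ρ j ∈ M (σ j) := by
    intro j hji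
    rw [hM]
    exact Finset.mem_insert_of_mem (Finset.mem_union_left _
      (Finset.mem_image.2 ⟨j, Finset.mem_filter.2 ⟨Finset.mem_univ _, hji, rfl⟩, rfl⟩))
  have hMθ : ∀ j : Fin 3, θ j ∈ M (c j) := by
    intro j
    rw [hM]
    exact Finset.mem_insert_of_mem (Finset.mem_union_right _
      (Finset.mem_image.2 ⟨j, Finset.mem_filter.2 ⟨Finset.mem_univ _, rfl⟩, rfl⟩))
  have hMIcc : ∀ i, ∀ t ∈ M i, 0 ≤ t ∧ t ≤ 1 := by
    intro i t htM
    rw [hM, Finset.mem_insert] at htM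
    rcases htM with rfl | htM
    · exact ⟨hτ0 i, hτ1 i⟩
    rcases Finset.mem_union.1 htM with htM | htM
    · obtain ⟨j, _, rfl⟩ := Finset.mem_image.1 htM
      exact ⟨hρ0 j, hρ1 j⟩
    · obtain ⟨j, _, rfl⟩ := Finset.mem_image.1 htM
      exact hθIcc j
  have hMcard : ∀ i, (M i).card ≤ n + 4 := by
    intro i
    rw [hM]
    calc (insert (τ i) (((Finset.univ.filter (fun j => j ≠ i₀ ∧ σ j = i)).image ρ) ∪
        ((Finset.univ.filter (fun j : Fin 3 => c j = i)).image θ))).card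
        ≤ (((Finset.univ.filter (fun j => j ≠ i₀ ∧ σ j = i)).image ρ) ∪
          ((Finset.univ.filter (fun j : Fin 3 => c j = i)).image θ)).card + 1 :=
          Finset.card_insert_le _ _
      _ ≤ (((Finset.univ.filter (fun j => j ≠ i₀ ∧ σ j = i)).image ρ)).card +
          (((Finset.univ.filter (fun j : Fin 3 => c j = i)).image θ)).card + 1 := by
          have := Finset.card_union_le (((Finset.univ.filter (fun j => j ≠ i₀ ∧ σ j = i)).image ρ))
            (((Finset.univ.filter (fun j : Fin 3 => c j = i)).image θ))
          omega
      _ ≤ n + 3 + 1 := by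
          have u1 : (((Finset.univ.filter (fun j => j ≠ i₀ ∧ σ j = i)).image ρ)).card ≤ n := by
            calc _ ≤ (Finset.univ.filter (fun j => j ≠ i₀ ∧ σ j = i)).card :=
                  Finset.card_image_le
              _ ≤ (Finset.univ : Finset (Fin n)).card := Finset.card_filter_le _ _
              _ = n := Finset.card_univ.trans (Fintype.card_fin n)
          have u2 : (((Finset.univ.filter (fun j : Fin 3 => c j = i)).image θ)).card ≤ 3 := by
            calc _ ≤ (Finset.univ.filter (fun j : Fin 3 => c j = i)).card :=
                  Finset.card_image_le
              _ ≤ (Finset.univ : Finset (Fin 3)).card := Finset.card_filter_le _ _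
              _ = 3 := Finset.card_univ.trans (Fintype.card_fin 3)
          omega
      _ = n + 4 := by omega
  -- rank and heights
  set rank : Fin n → ℝ → ℕ := fun i t =>
    ((M i).filter (fun s => min t (τ i) < s ∧ s < max t (τ i))).card +
      (if t = τ i then 0 else 1) with hrank
  set hei : Fin n × ℝ → ℕ := fun q => (n + 9) * d q.1 + rank q.1 q.2 with hhei
  set φ : Fin n × ℝ → E2 := fun q => pt q.1 q.2 with hφ
  set par : Fin n × ℝ → Fin n × ℝ := fun q =>
    if q.2 = τ q.1 then (if q.1 = i₀ then q else (σ q.1, ρ q.1))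
    else if q.2 < τ q.1 then (q.1, nxt (M q.1) (τ q.1) q.2)
    else (q.1, prv (M q.1) (τ q.1) q.2) with hpar
  set r : Fin n × ℝ := (i₀, τ i₀) with hr
  set Vf : Finset (Fin n × ℝ) :=
    Finset.univ.biUnion (fun i => (M i).image (fun t => (i, t))) with hVf
  have hφeq : ∀ (i : Fin n) (t : ℝ), φ (i, t) = pt i t := fun _ _ => rfl
  have hheieq : ∀ (i : Fin n) (t : ℝ), hei (i, t) = (n + 9) * d i + rank i t := fun _ _ => rfl
  have hrankeq : ∀ (i : Fin n) (t : ℝ), rank i t =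
      ((M i).filter (fun s => min t (τ i) < s ∧ s < max t (τ i))).card +
        (if t = τ i then 0 else 1) := fun _ _ => rfl
  have hpareq : ∀ (i : Fin n) (t : ℝ), par (i, t) =
      if t = τ i then (if i = i₀ then (i, t) else (σ i, ρ i))
      else if t < τ i then (i, nxt (M i) (τ i) t)
      else (i, prv (M i) (τ i) t) := fun _ _ => rfl
  have hVmem : ∀ (i : Fin n) (t : ℝ), (i, t) ∈ Vf ↔ t ∈ M i := by
    intro i t
    rw [hVf, Finset.mem_biUnion]
    constructor
    · rintro ⟨i', -, hmem⟩
      obtain ⟨t', ht', heq⟩ := Finset.mem_image.1 hmem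
      have h1 : i' = i := congrArg Prod.fst heq
      have h2 : t' = t := congrArg Prod.snd heq
      subst h1; subst h2
      exact ht'
    · intro htM
      exact ⟨i, Finset.mem_univ _, Finset.mem_image.2 ⟨t, htM, rfl⟩⟩
  have hrankτ : ∀ i, rank i (τ i) = 0 := by
    intro i
    rw [hrankeq, if_pos rfl]
    simp only [min_self, max_self]
    rw [Finset.filter_false_of_mem (fun s _ hs => absurd (lt_trans hs.1 hs.2) (lt_irrefl _))]
    simp
  have hrank_le : ∀ i t, rank i t ≤ (M i).card + 1 := by
    intro i t
    rw [hrankeq]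
    have := Finset.card_filter_le (M i) (fun s => min t (τ i) < s ∧ s < max t (τ i))
    split <;> omega
  have hparτ : ∀ i, i ≠ i₀ → par (i, τ i) = (σ i, ρ i) := by
    intro i hi
    rw [hpareq, if_pos rfl, if_neg hi]
  have hparroot : par r = r := by
    rw [hr, hpareq, if_pos rfl, if_pos rfl]
  have hparlt : ∀ i t, t < τ i → par (i, t) = (i, nxt (M i) (τ i) t) := by
    intro i t hlt
    rw [hpareq, if_neg (ne_of_lt hlt), if_pos hlt]
  have hpargt : ∀ i t, τ i < t → par (i, t) = (i, prv (M i) (τ i) t) := by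
    intro i t hgt
    rw [hpareq, if_neg (ne_of_gt hgt), if_neg (not_lt.2 (le_of_lt hgt))]
  have hparV : ∀ v ∈ Vf, par v ∈ Vf := by
    rintro ⟨i, t⟩ hv
    rw [hVmem] at hv
    rcases lt_trichotomy t (τ i) with hlt | heq | hgt
    · rw [hparlt i t hlt, hVmem]
      exact (nxt_spec (M i) (τ i) t (hMτ i) hlt).1
    · subst heq
      by_cases hi : i = i₀
      · subst hi
        rw [hpareq, if_pos rfl, if_pos rfl, hVmem]
        exact hv
      · rw [hparτ i hi, hVmem]
        exact hMρ i hi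
    · rw [hpargt i t hgt, hVmem]
      exact (prv_spec (M i) (τ i) t (hMτ i) hgt).1
  have hdec : ∀ v ∈ Vf, v ≠ r → hei (par v) < hei v := by
    rintro ⟨i, t⟩ hv hvr
    rw [hVmem] at hv
    rcases lt_trichotomy t (τ i) with hlt | heq | hgt
    · -- t < τ i : within-segment step toward the exit
      rw [hparlt i t hlt]
      obtain ⟨hbM, htb, hbτ⟩ := nxt_spec (M i) (τ i) t (hMτ i) hlt
      set b := nxt (M i) (τ i) t with hb
      have hrt : rank i t = ((M i).filter (fun s => t < s ∧ s < τ i)).card + 1 := by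
        rw [hrankeq]
        simp only [min_eq_left (le_of_lt hlt), max_eq_right (le_of_lt hlt),
          if_neg (ne_of_lt hlt)]
      rcases eq_or_lt_of_le hbτ with hbeq | hblt
      · rw [hheieq, hheieq, hbeq, hrankτ i, hrt]
        omega
      · have hrb : rank i b = ((M i).filter (fun s => b < s ∧ s < τ i)).card + 1 := by
          rw [hrankeq]
          simp only [min_eq_left (le_of_lt hblt), max_eq_right (le_of_lt hblt),
            if_neg (ne_of_lt hblt)]
        have hss : ((M i).filter (fun s => b < s ∧ s < τ i)).card <
            ((M i).filter (fun s => t < s ∧ s < τ i)).card := by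
          apply Finset.card_lt_card
          constructor
          · intro s hs'
            rw [Finset.mem_filter] at hs' ⊢
            exact ⟨hs'.1, lt_trans htb hs'.2.1, hs'.2.2⟩
          · intro hcon
            have hbmem : b ∈ (M i).filter (fun s => t < s ∧ s < τ i) :=
              Finset.mem_filter.2 ⟨hbM, htb, hblt⟩
            have := Finset.mem_filter.1 (hcon hbmem)
            exact absurd this.2.1 (lt_irrefl b)
        rw [hheieq, hheieq, hrt, hrb]
        omega
    · -- t = τ i : crossing to the parent segment
      subst heq
      have hi : i ≠ i₀ := by
        intro hii
        apply hvr
        rw [hr, hii]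
      rw [hparτ i hi, hheieq, hheieq, hrankτ i]
      have h1 : (n + 9) * (d (σ i) + 1) ≤ (n + 9) * d i :=
        Nat.mul_le_mul_left _ (hdσ i hi)
      have h2 : rank (σ i) (ρ i) ≤ n + 5 := by
        have := hrank_le (σ i) (ρ i)
        have := hMcard (σ i)
        omega
      have h3 : (n + 9) * (d (σ i) + 1) = (n + 9) * d (σ i) + (n + 9) := Nat.mul_succ _ _
      omega
    · -- τ i < t
      rw [hpargt i t hgt]
      obtain ⟨hbM, htb, hbτ⟩ := prv_spec (M i) (τ i) t (hMτ i) hgt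
      set b := prv (M i) (τ i) t with hb
      have hrt : rank i t = ((M i).filter (fun s => τ i < s ∧ s < t)).card + 1 := by
        rw [hrankeq]
        simp only [min_eq_right (le_of_lt hgt), max_eq_left (le_of_lt hgt),
          if_neg (ne_of_gt hgt)]
      rcases eq_or_lt_of_le hbτ with hbeq | hblt
      · rw [hheieq, hheieq, ← hbeq, hrankτ i, hrt]
        omega
      · have hrb : rank i b = ((M i).filter (fun s => τ i < s ∧ s < b)).card + 1 := by
          rw [hrankeq]
          simp only [min_eq_right (le_of_lt hblt), max_eq_left (le_of_lt hblt),
            if_neg (ne_of_gt hblt)]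
        have hss : ((M i).filter (fun s => τ i < s ∧ s < b)).card <
            ((M i).filter (fun s => τ i < s ∧ s < t)).card := by
          apply Finset.card_lt_card
          constructor
          · intro s hs'
            rw [Finset.mem_filter] at hs' ⊢
            exact ⟨hs'.1, hs'.2.1, lt_trans hs'.2.2 htb⟩
          · intro hcon
            have hbmem : b ∈ (M i).filter (fun s => τ i < s ∧ s < t) :=
              Finset.mem_filter.2 ⟨hbM, hblt, htb⟩
            have := Finset.mem_filter.1 (hcon hbmem)
            exact absurd this.2.2 (lt_irrefl b)
        rw [hheieq, hheieq, hrt, hrb]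
        omega
  -- the sum of the tree edge lengths is at most the total length
  have hsum : ∑ v ∈ Vf, dist (φ v) (φ (par v)) ≤ totalLength e := by
    rw [hVf]
    rw [Finset.sum_biUnion (by
      intro i _ j _ hij
      apply Finset.disjoint_left.2
      rintro ⟨a, b⟩ hmem1 hmem2
      obtain ⟨t1, -, heq1⟩ := Finset.mem_image.1 hmem1
      obtain ⟨t2, -, heq2⟩ := Finset.mem_image.1 hmem2
      exact hij ((congrArg Prod.fst heq1).trans (congrArg Prod.fst heq2).symm))]
    rw [totalLength]
    apply Finset.sum_le_sum
    intro i _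
    rw [Finset.sum_image (by intro x _ y _ h; exact congrArg Prod.snd h)]
    set L : ℝ := dist (e i).1 (e i).2 with hL
    have hL0 : 0 ≤ L := dist_nonneg
    have hptdist : ∀ s u : ℝ, dist (pt i s) (pt i u) = |s - u| * L := by
      intro s u
      rw [hpt, hL]
      simp only
      rw [dist_lineMap_lineMap, Real.dist_eq]
    have hpoint : ∀ t ∈ M i, dist (φ (i, t)) (φ (par (i, t))) =
        (if t < τ i then nxt (M i) (τ i) t - t
         else if τ i < t then t - prv (M i) (τ i) t else 0) * L := by
      intro t htM
      rcases lt_trichotomy t (τ i) with hlt | heq | hgt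
      · rw [hparlt i t hlt, if_pos hlt]
        obtain ⟨hbM, htb, hbτ⟩ := nxt_spec (M i) (τ i) t (hMτ i) hlt
        rw [hφeq, hφeq, hptdist, abs_of_neg (by linarith : t - nxt (M i) (τ i) t < 0)]
        ring
      · subst heq
        rw [if_neg (lt_irrefl _), if_neg (lt_irrefl _), zero_mul]
        by_cases hi : i = i₀
        · subst hi
          rw [hpareq, if_pos rfl, if_pos rfl, dist_self]
        · rw [hparτ i hi, hφeq, hφeq, hw i, dist_self]
      · rw [hpargt i t hgt, if_neg (not_lt.2 (le_of_lt hgt)), if_pos hgt]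
        obtain ⟨hbM, htb, hbτ⟩ := prv_spec (M i) (τ i) t (hMτ i) hgt
        rw [hφeq, hφeq, hptdist, abs_of_pos (by linarith : 0 < t - prv (M i) (τ i) t)]
    rw [Finset.sum_congr rfl hpoint]
    have hsplit : ∀ t : ℝ,
        (if t < τ i then nxt (M i) (τ i) t - t
         else if τ i < t then t - prv (M i) (τ i) t else 0) * L =
        (if t < τ i then (nxt (M i) (τ i) t - t) * L else 0) +
        (if τ i < t then (t - prv (M i) (τ i) t) * L else 0) := by
      intro t
      rcases lt_trichotomy t (τ i) with hlt | heq | hgt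
      · simp [hlt, not_lt.2 (le_of_lt hlt)]
      · subst heq
        simp [lt_irrefl]
      · simp [hgt, not_lt.2 (le_of_lt hgt)]
    rw [Finset.sum_congr rfl (fun t _ => hsplit t), Finset.sum_add_distrib]
    rw [← Finset.sum_filter, ← Finset.sum_filter, ← Finset.sum_mul, ← Finset.sum_mul]
    have g1 : ∑ t ∈ (M i).filter (· < τ i), (nxt (M i) (τ i) t - t) ≤ τ i - 0 :=
      gaps_lt (M i).card (M i) (τ i) 0 (hMτ i) (hτ0 i) (fun t htM => (hMIcc i t htM).1)
        (Finset.card_filter_le _ _)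
    have g2 : ∑ t ∈ (M i).filter (τ i < ·), (t - prv (M i) (τ i) t) ≤ 1 - τ i :=
      gaps_gt (M i).card (M i) (τ i) 1 (hMτ i) (hτ1 i) (fun t htM => (hMIcc i t htM).2)
        (Finset.card_filter_le _ _)
    have e1 : (∑ t ∈ (M i).filter (· < τ i), (nxt (M i) (τ i) t - t)) * L ≤ (τ i) * L := by
      apply mul_le_mul_of_nonneg_right _ hL0
      linarith
    have e2 : (∑ t ∈ (M i).filter (τ i < ·), (t - prv (M i) (τ i) t)) * L ≤ (1 - τ i) * L := by
      apply mul_le_mul_of_nonneg_right _ hL0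
      linarith
    nlinarith
  -- terminals as vertices
  set tm : Fin 3 → Fin n × ℝ := ![(c 0, θ 0), (c 1, θ 1), (c 2, θ 2)] with htm
  have htmV : ∀ j, tm j ∈ Vf := by
    intro j
    fin_cases j <;>
      · rw [htm]
        simp only [Matrix.cons_val_zero, Matrix.cons_val_one, Matrix.head_cons,
          Matrix.cons_val_two, Matrix.tail_cons]
        rw [hVmem]
        first
          | exact hMθ 0
          | exact hMθ 1
          | exact hMθ 2
  have hc0 : c 0 = sc0 := rfl
  have hc1 : c 1 = sc1 := rfl
  have hc2 : c 2 = sc2 := rfl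
  have hθe0 : θ 0 = θ0 := rfl
  have hθe1 : θ 1 = θ1 := rfl
  have hθe2 : θ 2 = θ2 := rfl
  have htm0 : tm 0 = (c 0, θ 0) := rfl
  have htm1 : tm 1 = (c 1, θ 1) := rfl
  have htm2 : tm 2 = (c 2, θ 2) := rfl
  have hbig := tree_lower_bound Vf φ par hei r hparV hparroot hdec tm htmV
    (by rw [hr, hφeq, hτi₀]; exact hτ₀)
    (by rw [htm0, hφeq, hc0, hθe0]; exact hθ0x)
    (by rw [htm1, hφeq, hc1, hθe1]; exact hθ1x)
    (by rw [htm2, hφeq, hc2, hθe2]; exact hθ2x)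
  linarith

end SteinerAux

/-- For the regular hexagon with unit side, the Steiner minimal tree of four consecutive
vertices `{a₁, b₁, c₁, a₂}` has length exactly `3`, achieved by the three hexagon edges
`[a₁,b₁] ∪ [b₁,c₁] ∪ [c₁,a₂]`: every connected finite union of segments containing the
four points has total length at least `3`, and the three edges achieve it. -/
theorem steiner_tree_four_hexagon_vertices
    (a₁ b₁ c₁ a₂ : E2)
    (ha₁ : a₁ = !₂[-1/2, Real.sqrt 3 / 2]) (hb₁ : b₁ = !₂[-1, 0])
    (hc₁ : c₁ = !₂[-1/2, -(Real.sqrt 3 / 2)]) (ha₂ : a₂ = !₂[1/2, -(Real.sqrt 3 / 2)]) :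
    (∀ (n : ℕ) (e : Fin n → E2 × E2), IsConnected (segUnion e) →
      ({a₁, b₁, c₁, a₂} : Set E2) ⊆ segUnion e → 3 ≤ totalLength e) ∧
    (IsConnected (segment ℝ a₁ b₁ ∪ segment ℝ b₁ c₁ ∪ segment ℝ c₁ a₂) ∧
      ({a₁, b₁, c₁, a₂} : Set E2) ⊆ segment ℝ a₁ b₁ ∪ segment ℝ b₁ c₁ ∪ segment ℝ c₁ a₂ ∧
      dist a₁ b₁ + dist b₁ c₁ + dist c₁ a₂ = 3) := by
  have hVa₁ : a₁ = V2 (-1/2) (Real.sqrt 3 / 2) := ha₁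
  have hVb₁ : b₁ = V2 (-1) 0 := hb₁
  have hVc₁ : c₁ = V2 (-1/2) (-(Real.sqrt 3 / 2)) := hc₁
  have hVa₂ : a₂ = V2 (1/2) (-(Real.sqrt 3 / 2)) := ha₂
  constructor
  · intro n e hconn hsub
    apply lower_bound e hconn
    · rw [← hVa₁]; exact hsub (by simp)
    · rw [← hVb₁]; exact hsub (by simp)
    · rw [← hVc₁]; exact hsub (by simp)
    · rw [← hVa₂]; exact hsub (by simp)
  · have hd1 : dist a₁ b₁ = 1 := by
      rw [hVa₁, hVb₁, dist_V2]
      rw [show (-1/2 - -1 : ℝ)^2 + (Real.sqrt 3/2 - 0)^2 = 1 by nlinarith [sq3]]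
      exact Real.sqrt_one
    have hd2 : dist b₁ c₁ = 1 := by
      rw [hVb₁, hVc₁, dist_V2]
      rw [show (-1 - -1/2 : ℝ)^2 + (0 - -(Real.sqrt 3/2))^2 = 1 by nlinarith [sq3]]
      exact Real.sqrt_one
    have hd3 : dist c₁ a₂ = 1 := by
      rw [hVc₁, hVa₂, dist_V2]
      rw [show (-1/2 - 1/2 : ℝ)^2 + (-(Real.sqrt 3/2) - -(Real.sqrt 3/2))^2 = 1 by norm_num]
      exact Real.sqrt_one
    refine ⟨?_, ?_, by rw [hd1, hd2, hd3]; norm_num⟩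
    · apply IsConnected.union ⟨c₁, Or.inr (right_mem_segment ℝ b₁ c₁), left_mem_segment ℝ c₁ a₂⟩
      · apply IsConnected.union ⟨b₁, right_mem_segment ℝ a₁ b₁, left_mem_segment ℝ b₁ c₁⟩
          (isConnected_seg _ _) (isConnected_seg _ _)
      · exact isConnected_seg _ _
    · rintro x (rfl | rfl | rfl | rfl)
      · exact Or.inl (Or.inl (left_mem_segment ℝ _ _))
      · exact Or.inl (Or.inl (right_mem_segment ℝ _ _))
      · exact Or.inl (Or.inr (right_mem_segment ℝ _ _))
      · exact Or.inr (right_mem_segment ℝ _ _)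
end

section
/- Let Q be the unit circle {(x,y,0) : x²+y²=1} in ℝ³, let a₁=(-1/2,0,√3/2), c₂=(1/2,0,√3/2), and let s be any point in ℝ³. If b ∈ {(0,1,0), (0,-1,0)}, then d(s,a₁)+d(s,c₂)+d(s,b) ≥ (√7+√3)/2 > 2. -/
open Real

private lemma cs3 (a b c x y z : ℝ) (h : a^2+b^2+c^2 ≤ 1) :
    a*x + b*y + c*z ≤ Real.sqrt (x^2+y^2+z^2) := by
  have h0 : (0:ℝ) ≤ x^2+y^2+z^2 := by positivity
  have hs := Real.sq_sqrt h0
  have hn := Real.sqrt_nonneg (x^2+y^2+z^2)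
  nlinarith [sq_nonneg (a*y-b*x), sq_nonneg (a*z-c*x), sq_nonneg (b*z-c*y),
    sq_nonneg (a*x+b*y+c*z - Real.sqrt (x^2+y^2+z^2)),
    sq_nonneg (a*x+b*y+c*z + Real.sqrt (x^2+y^2+z^2))]

private lemma dist_ge (s p : EuclideanSpace ℝ (Fin 3)) (a b c : ℝ) (h : a^2+b^2+c^2 ≤ 1) :
    a*(p 0 - s 0) + b*(p 1 - s 1) + c*(p 2 - s 2) ≤ dist s p := by
  rw [EuclideanSpace.dist_eq]
  have : ∑ i, dist (s i) (p i) ^ 2 = (p 0 - s 0)^2 + (p 1 - s 1)^2 + (p 2 - s 2)^2 := by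
    simp [Fin.sum_univ_three, Real.dist_eq, sq_abs]
    ring
  rw [this]
  exact cs3 _ _ _ _ _ _ h

set_option maxHeartbeats 2000000 in
/-- For `a₁ = (-1/2, 0, √3/2)`, `c₂ = (1/2, 0, √3/2)` and `b` one of `(0,±1,0)`, every point
`s` in `ℝ³` satisfies `d(s,a₁)+d(s,c₂)+d(s,b) ≥ (√7+√3)/2 > 2`: the minimal tree of the
triple `{a₁, c₂, b}` has length `(√7+√3)/2`. -/
theorem triod_length_to_equator_point (a₁ c₂ b : EuclideanSpace ℝ (Fin 3))
    (ha₁ : a₁ = ![-1/2, 0, Real.sqrt 3 / 2]) (hc₂ : c₂ = ![1/2, 0, Real.sqrt 3 / 2])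
    (hb : b = ![0, (1 : ℝ), 0] ∨ b = ![0, (-1 : ℝ), 0]) :
    (∀ s : EuclideanSpace ℝ (Fin 3),
      (Real.sqrt 7 + Real.sqrt 3) / 2 ≤ dist s a₁ + dist s c₂ + dist s b) ∧
    (Real.sqrt 7 + Real.sqrt 3) / 2 > 2 := by
  have h3 : Real.sqrt 3 ^ 2 = 3 := Real.sq_sqrt (by norm_num)
  have h7 : Real.sqrt 7 ^ 2 = 7 := Real.sq_sqrt (by norm_num)
  have h3n : (0:ℝ) ≤ Real.sqrt 3 := Real.sqrt_nonneg 3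
  have h7n : (0:ℝ) ≤ Real.sqrt 7 := Real.sqrt_nonneg 7
  set r3 := Real.sqrt 3
  set r7 := Real.sqrt 7
  have hu1 : (-r3/2)^2 + (-(r7/7))^2 + (r3*r7/14)^2 ≤ 1 := by nlinarith [h3, h7]
  have hu2 : (r3/2)^2 + (-(r7/7))^2 + (r3*r7/14)^2 ≤ 1 := by nlinarith [h3, h7]
  have hu3 : (0:ℝ)^2 + (2*r7/7)^2 + (-(r3*r7/7))^2 ≤ 1 := by nlinarith [h3, h7]
  have hu1' : (-r3/2)^2 + (r7/7)^2 + (r3*r7/14)^2 ≤ 1 := by nlinarith [h3, h7]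
  have hu2' : (r3/2)^2 + (r7/7)^2 + (r3*r7/14)^2 ≤ 1 := by nlinarith [h3, h7]
  have hu3' : (0:ℝ)^2 + (-(2*r7/7))^2 + (-(r3*r7/7))^2 ≤ 1 := by nlinarith [h3, h7]
  constructor
  · intro s
    rcases hb with hb | hb
    · have H1 := dist_ge s a₁ (-r3/2) (-(r7/7)) (r3*r7/14) hu1
      have H2 := dist_ge s c₂ (r3/2) (-(r7/7)) (r3*r7/14) hu2
      have H3 := dist_ge s b 0 (2*r7/7) (-(r3*r7/7)) hu3
      simp only [ha₁, hc₂, hb, Matrix.cons_val_zero, Matrix.cons_val_one, Matrix.head_cons,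
        Matrix.cons_val_two, Matrix.tail_cons] at H1 H2 H3
      nlinarith [h3, H1, H2, H3]
    · have H1 := dist_ge s a₁ (-r3/2) (r7/7) (r3*r7/14) hu1'
      have H2 := dist_ge s c₂ (r3/2) (r7/7) (r3*r7/14) hu2'
      have H3 := dist_ge s b 0 (-(2*r7/7)) (-(r3*r7/7)) hu3'
      simp only [ha₁, hc₂, hb, Matrix.cons_val_zero, Matrix.cons_val_one, Matrix.head_cons,
        Matrix.cons_val_two, Matrix.tail_cons] at H1 H2 H3
      nlinarith [h3, H1, H2, H3]
  · nlinarith [sq_nonneg (r7 - 2.6), sq_nonneg (r3 - 1.7), h3, h7]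
end

section
/- Let a₂=(1/2,-√3/2) and c=(1/2, √3/2 - t) for small t>0 be points in ℝ², and let P be the unit circle. For v on a small arc of P near b₂=(1,0) below the x-axis, the Steiner tree length ST(v) = min over s of [d(s,a₂)+d(s,v)+d(s,c)] is strictly monotone as v moves along the arc toward b₂, attaining its maximum at v = b₂. -/
open Real

/-- The Steiner tree length for `{a₂, v, c}` as a function of `v`. -/
noncomputable def steinerLen (a₂ c v : EuclideanSpace ℝ (Fin 2)) : ℝ :=
  sInf {L : ℝ | ∃ s : EuclideanSpace ℝ (Fin 2), L = dist s a₂ + dist s v + dist s c}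

namespace SteinerAux

noncomputable def pt (a b : ℝ) : EuclideanSpace ℝ (Fin 2) := !₂[a, b]

noncomputable def UX (r C S : ℝ) : ℝ := 1/2 + C/2 + r*S/2
noncomputable def UY (r C S t : ℝ) : ℝ := t - r/2 - r*C/2 + S/2
noncomputable def QP (r C S t : ℝ) : ℝ := (UX r C S)^2 + (UY r C S t)^2
noncomputable def GP (r C S t : ℝ) : ℝ := (1 - r*t/3) * UX r C S
noncomputable def DP (r C S t : ℝ) : ℝ := (t - r) * UY r C S t

lemma dist_pt (s : EuclideanSpace ℝ (Fin 2)) (c d : ℝ) :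
    dist s (pt c d) = Real.sqrt ((s 0 - c)^2 + (s 1 - d)^2) := by
  rw [EuclideanSpace.dist_eq]
  simp [pt, Fin.sum_univ_two, Real.dist_eq, sq_abs]

lemma dist_pts (a b c d : ℝ) :
    dist (pt a b) (pt c d) = Real.sqrt ((a - c)^2 + (b - d)^2) := by
  rw [EuclideanSpace.dist_eq]
  simp [pt, Fin.sum_univ_two, Real.dist_eq, sq_abs]

lemma tri2 (x1 y1 x2 y2 x3 y3 : ℝ) :
    Real.sqrt ((x1 - x3)^2 + (y1 - y3)^2)
      ≤ Real.sqrt ((x1 - x2)^2 + (y1 - y2)^2) + Real.sqrt ((x2 - x3)^2 + (y2 - y3)^2) := by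
  have h := dist_triangle (pt x1 y1) (pt x2 y2) (pt x3 y3)
  rwa [dist_pts, dist_pts, dist_pts] at h

lemma ka (r C S t : ℝ) (hr : r^2 = 3) :
    ((DP r C S t - GP r C S t) * UX r C S)^2
      + ((r - t) * QP r C S t + (DP r C S t - GP r C S t) * UY r C S t)^2
    = (2 * GP r C S t)^2 * QP r C S t := by
  simp only [UX, UY, QP, GP, DP]
  linear_combination ((1/16:ℝ) + (11/48:ℝ)*t^2 + (-1/12:ℝ)*t^4 + (1/4:ℝ)*S*t + (-1/12:ℝ)*S*t^3 + (1/16:ℝ)*S^2 + (-1/48:ℝ)*S^2*t^2 + (1/4:ℝ)*C + (5/12:ℝ)*C*t^2 + (-1/6:ℝ)*C*t^4 + (1/2:ℝ)*C*S*t + (-1/6:ℝ)*C*S*t^3 + (1/8:ℝ)*C*S^2 + (-1/24:ℝ)*C*S^2*t^2 + (3/8:ℝ)*C^2 + (1/8:ℝ)*C^2*t^2 + (-1/12:ℝ)*C^2*t^4 + (1/4:ℝ)*C^2*S*t + (-1/12:ℝ)*C^2*S*t^3 + (1/16:ℝ)*C^2*S^2 + (-1/48:ℝ)*C^2*S^2*t^2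 + (1/4:ℝ)*C^3 + (-1/12:ℝ)*C^3*t^2 + (1/16:ℝ)*C^4 + (-1/48:ℝ)*C^4*t^2 + (-1/4:ℝ)*r*t + (1/12:ℝ)*r*t^3 + (1/8:ℝ)*r*S + (11/24:ℝ)*r*S*t^2 + (-1/6:ℝ)*r*S*t^4 + (1/2:ℝ)*r*S^2*t + (-1/6:ℝ)*r*S^2*t^3 + (1/8:ℝ)*r*S^3 + (-1/24:ℝ)*r*S^3*t^2 + (-3/4:ℝ)*r*C*t + (1/4:ℝ)*r*C*t^3 + (3/8:ℝ)*r*C*S + (3/8:ℝ)*r*C*S*t^2 + (-1/6:ℝ)*r*C*S*t^4 + (1/2:ℝ)*r*C*S^2*t + (-1/6:ℝ)*r*C*S^2*t^3 + (1/8:ℝ)*r*C*S^3 + (-1/24:ℝ)*r*C*S^3*t^2 + (-3/4:ℝ)*r*C^2*t + (1/4:ℝ)*r*C^2*t^3 + (3/8:ℝ)*r*C^2*S + (-1/8:ℝ)*r*C^2*S*t^2 + (-1/4:ℝ)*r*C^3*t + (1/12:ℝ)*r*C^3*t^3 + (1/8:ℝ)*r*C^3*S + (-1/24:ℝ)*r*C^3*S*t^2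 + (1/16:ℝ)*r^2 + (-1/48:ℝ)*r^2*t^2 + (-1/2:ℝ)*r^2*S*t + (1/6:ℝ)*r^2*S*t^3 + (1/8:ℝ)*r^2*S^2 + (5/24:ℝ)*r^2*S^2*t^2 + (-1/12:ℝ)*r^2*S^2*t^4 + (1/4:ℝ)*r^2*S^3*t + (-1/12:ℝ)*r^2*S^3*t^3 + (1/16:ℝ)*r^2*S^4 + (-1/48:ℝ)*r^2*S^4*t^2 + (1/4:ℝ)*r^2*C + (-1/12:ℝ)*r^2*C*t^2 + (-1:ℝ)*r^2*C*S*t + (1/3:ℝ)*r^2*C*S*t^3 + (1/4:ℝ)*r^2*C*S^2 + (-1/12:ℝ)*r^2*C*S^2*t^2 + (3/8:ℝ)*r^2*C^2 + (-1/8:ℝ)*r^2*C^2*t^2 + (-1/2:ℝ)*r^2*C^2*S*t + (1/6:ℝ)*r^2*C^2*S*t^3 + (1/8:ℝ)*r^2*C^2*S^2 + (-1/24:ℝ)*r^2*C^2*S^2*t^2 + (1/4:ℝ)*r^2*C^3 + (-1/12:ℝ)*r^2*C^3*t^2 + (1/16:ℝ)*r^2*C^4 + (-1/48:ℝ)*r^2*C^4*t^2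 + (1/8:ℝ)*r^3*S + (-1/24:ℝ)*r^3*S*t^2 + (-1/4:ℝ)*r^3*S^2*t + (1/12:ℝ)*r^3*S^2*t^3 + (1/8:ℝ)*r^3*S^3 + (-1/24:ℝ)*r^3*S^3*t^2 + (3/8:ℝ)*r^3*C*S + (-1/8:ℝ)*r^3*C*S*t^2 + (-1/4:ℝ)*r^3*C*S^2*t + (1/12:ℝ)*r^3*C*S^2*t^3 + (1/8:ℝ)*r^3*C*S^3 + (-1/24:ℝ)*r^3*C*S^3*t^2 + (3/8:ℝ)*r^3*C^2*S + (-1/8:ℝ)*r^3*C^2*S*t^2 + (1/8:ℝ)*r^3*C^3*S + (-1/24:ℝ)*r^3*C^3*S*t^2 + (1/16:ℝ)*r^4*S^2 + (-1/48:ℝ)*r^4*S^2*t^2 + (1/16:ℝ)*r^4*S^4 + (-1/48:ℝ)*r^4*S^4*t^2 + (1/8:ℝ)*r^4*C*S^2 + (-1/24:ℝ)*r^4*C*S^2*t^2 + (1/16:ℝ)*r^4*C^2*S^2 + (-1/48:ℝ)*r^4*C^2*S^2*t^2) * hr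

lemma kv (r C S t : ℝ) (hr : r^2 = 3) :
    ((1/2 - C) * QP r C S t + (DP r C S t - GP r C S t) * UX r C S)^2
      + ((r/2 - t - S) * QP r C S t + (DP r C S t - GP r C S t) * UY r C S t)^2
    = (QP r C S t - DP r C S t - GP r C S t)^2 * QP r C S t := by
  simp only [UX, UY, QP, GP, DP]
  linear_combination ((-1/12:ℝ)*t^2 + (-1/3:ℝ)*t^4 + (-3/16:ℝ)*S*t + (-13/12:ℝ)*S*t^3 + (-5/64:ℝ)*S^2 + (-29/24:ℝ)*S^2*t^2 + (-1/4:ℝ)*S^2*t^4 + (-9/16:ℝ)*S^3*t + (-1/2:ℝ)*S^3*t^3 + (-3/32:ℝ)*S^4 + (-3/8:ℝ)*S^4*t^2 + (-1/8:ℝ)*S^5*t + (-1/64:ℝ)*S^6 + (-1/32:ℝ)*C + (-5/24:ℝ)*C*t^2 + (1/3:ℝ)*C*t^4 + (-9/16:ℝ)*C*S*t + (1/12:ℝ)*C*S*t^3 + (-1/4:ℝ)*C*S^2 + (-13/24:ℝ)*C*S^2*t^2 + (-7/16:ℝ)*C*S^3*t + (-3/32:ℝ)*C*S^4 + (-9/64:ℝ)*C^2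 + (-1/4:ℝ)*C^2*t^2 + (-1/12:ℝ)*C^2*t^4 + (-11/16:ℝ)*C^2*S*t + (-1/3:ℝ)*C^2*S*t^3 + (-5/16:ℝ)*C^2*S^2 + (-11/24:ℝ)*C^2*S^2*t^2 + (-1/4:ℝ)*C^2*S^3*t + (-3/64:ℝ)*C^2*S^4 + (-1/4:ℝ)*C^3 + (-5/24:ℝ)*C^3*t^2 + (-7/16:ℝ)*C^3*S*t + (-3/16:ℝ)*C^3*S^2 + (-7/32:ℝ)*C^4 + (-1/12:ℝ)*C^4*t^2 + (-1/8:ℝ)*C^4*S*t + (-3/64:ℝ)*C^4*S^2 + (-3/32:ℝ)*C^5 + (-1/64:ℝ)*C^6 + (1/24:ℝ)*r*t + (1/2:ℝ)*r*t^3 + (1/16:ℝ)*r*S + (13/12:ℝ)*r*S*t^2 + (-1/3:ℝ)*r*S*t^4 + (11/24:ℝ)*r*S^2*t + (-2/3:ℝ)*r*S^2*t^3 + (-2/3:ℝ)*r*S^3*t^2 + (-1/3:ℝ)*r*S^4*t + (-1/16:ℝ)*r*S^5 + (7/48:ℝ)*r*C*t + (-1/4:ℝ)*r*C*t^3 + (1/8:ℝ)*r*C*S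 + (5/8:ℝ)*r*C*S*t^2 + (1/6:ℝ)*r*C*S*t^4 + (1/4:ℝ)*r*C*S^2*t + (7/12:ℝ)*r*C*S^2*t^3 + (-1/8:ℝ)*r*C*S^3 + (11/24:ℝ)*r*C*S^3*t^2 + (5/48:ℝ)*r*C*S^4*t + (7/24:ℝ)*r*C^2*t + (-1/2:ℝ)*r*C^2*t^3 + (-1/8:ℝ)*r*C^2*S^3 + (5/12:ℝ)*r*C^3*t + (1/4:ℝ)*r*C^3*t^3 + (-1/8:ℝ)*r*C^3*S + (11/24:ℝ)*r*C^3*S*t^2 + (5/24:ℝ)*r*C^3*S^2*t + (1/3:ℝ)*r*C^4*t + (-1/16:ℝ)*r*C^4*S + (5/48:ℝ)*r*C^5*t + (-1/4:ℝ)*r^2*t^2 + (-19/48:ℝ)*r^2*S*t + (1/2:ℝ)*r^2*S*t^3 + (-1/32:ℝ)*r^2*S^2 + (19/24:ℝ)*r^2*S^2*t^2 + (5/24:ℝ)*r^2*S^3*t + (-1/12:ℝ)*r^2*S^3*t^3 + (-1/16:ℝ)*r^2*S^4 + (-5/24:ℝ)*r^2*S^4*t^2 + (-7/48:ℝ)*r^2*S^5*t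 + (-1/32:ℝ)*r^2*S^6 + (1/8:ℝ)*r^2*C*t^2 + (-11/24:ℝ)*r^2*C*S*t + (1/4:ℝ)*r^2*C*S*t^3 + (-1/8:ℝ)*r^2*C*S^2 + (11/24:ℝ)*r^2*C*S^2*t^2 + (1/24:ℝ)*r^2*C*S^3*t + (-1/8:ℝ)*r^2*C*S^4 + (-1/32:ℝ)*r^2*C^2 + (3/4:ℝ)*r^2*C^2*t^2 + (1/8:ℝ)*r^2*C^2*S*t + (-1/4:ℝ)*r^2*C^2*S*t^3 + (-1/4:ℝ)*r^2*C^2*S^2 + (-11/24:ℝ)*r^2*C^2*S^2*t^2 + (-7/24:ℝ)*r^2*C^2*S^3*t + (-3/32:ℝ)*r^2*C^2*S^4 + (-1/8:ℝ)*r^2*C^3 + (1/8:ℝ)*r^2*C^3*t^2 + (1/24:ℝ)*r^2*C^3*S*t + (-1/4:ℝ)*r^2*C^3*S^2 + (-3/16:ℝ)*r^2*C^4 + (-1/4:ℝ)*r^2*C^4*t^2 + (-7/48:ℝ)*r^2*C^4*S*t + (-3/32:ℝ)*r^2*C^4*S^2 + (-1/8:ℝ)*r^2*C^5 + (-1/32:ℝ)*r^2*C^6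 + (1/24:ℝ)*r^3*t + (1/16:ℝ)*r^3*S + (-1/4:ℝ)*r^3*S*t^2 + (-7/24:ℝ)*r^3*S^2*t + (-1/12:ℝ)*r^3*S^4*t + (-1/16:ℝ)*r^3*S^5 + (-5/48:ℝ)*r^3*C*t + (1/8:ℝ)*r^3*C*S + (-3/8:ℝ)*r^3*C*S*t^2 + (-1/2:ℝ)*r^3*C*S^2*t + (-1/8:ℝ)*r^3*C*S^3 + (1/8:ℝ)*r^3*C*S^3*t^2 + (5/48:ℝ)*r^3*C*S^4*t + (-11/24:ℝ)*r^3*C^2*t + (-1/8:ℝ)*r^3*C^2*S^3 + (-1/3:ℝ)*r^3*C^3*t + (-1/8:ℝ)*r^3*C^3*S + (1/8:ℝ)*r^3*C^3*S*t^2 + (5/24:ℝ)*r^3*C^3*S^2*t + (1/12:ℝ)*r^3*C^4*t + (-1/16:ℝ)*r^3*C^4*S + (5/48:ℝ)*r^3*C^5*t + (1/24:ℝ)*r^4*S*t + (3/64:ℝ)*r^4*S^2 + (1/48:ℝ)*r^4*S^3*t + (1/32:ℝ)*r^4*S^4 + (-1/48:ℝ)*r^4*S^5*t + (-1/64:ℝ)*r^4*S^6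 + (1/32:ℝ)*r^4*C + (5/48:ℝ)*r^4*C*S*t + (1/8:ℝ)*r^4*C*S^2 + (-1/48:ℝ)*r^4*C*S^3*t + (-1/32:ℝ)*r^4*C*S^4 + (7/64:ℝ)*r^4*C^2 + (1/16:ℝ)*r^4*C^2*S*t + (1/16:ℝ)*r^4*C^2*S^2 + (-1/24:ℝ)*r^4*C^2*S^3*t + (-3/64:ℝ)*r^4*C^2*S^4 + (1/8:ℝ)*r^4*C^3 + (-1/48:ℝ)*r^4*C^3*S*t + (-1/16:ℝ)*r^4*C^3*S^2 + (1/32:ℝ)*r^4*C^4 + (-1/48:ℝ)*r^4*C^4*S*t + (-3/64:ℝ)*r^4*C^4*S^2 + (-1/32:ℝ)*r^4*C^5 + (-1/64:ℝ)*r^4*C^6) * hr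

lemma qs (r C S t : ℝ) (hr : r^2 = 3) (hp : S^2 + C^2 = 1) :
    QP r C S t = 2 + t^2 - r*t + (2 - r*t)*C + t*S := by
  simp only [UX, UY, QP]
  linear_combination ((1/4:ℝ) + (1/4:ℝ)*S^2 + (1/2:ℝ)*C + (1/4:ℝ)*C^2) * hr + hp

/-- Lower bound: every Steiner candidate length is at least `√Q`. -/
lemma lower (t θ : ℝ) (s : EuclideanSpace ℝ (Fin 2)) :
    Real.sqrt (QP (Real.sqrt 3) (Real.cos θ) (Real.sin θ) t)
      ≤ dist s (pt (1/2) (-(Real.sqrt 3 / 2))) + dist s (pt (Real.cos θ) (Real.sin θ))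
          + dist s (pt (1/2) (Real.sqrt 3 / 2 - t)) := by
  rw [dist_pt, dist_pt, dist_pt]
  set r := Real.sqrt 3 with hrdef
  set C := Real.cos θ with hCdef
  set S := Real.sin θ with hSdef
  have hr : r^2 = 3 := Real.sq_sqrt (by norm_num)
  set RX : ℝ := 1/2 + ((s 0) - 1/2)/2 + r*((s 1) + r/2)/2 with hRX
  set RY : ℝ := -(r/2) - r*((s 0) - 1/2)/2 + ((s 1) + r/2)/2 with hRY
  set WX : ℝ := 1 + C/2 + r*S/2 with hWX
  set WY : ℝ := S/2 - r*C/2 with hWY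
  have eA : Real.sqrt ((1/2 - s 0)^2 + ((r/2 - t) - s 1)^2)
      = Real.sqrt ((s 0 - 1/2)^2 + (s 1 - (r/2 - t))^2) := by
    apply congrArg
    ring
  have eB : Real.sqrt ((s 0 - RX)^2 + (s 1 - RY)^2)
      = Real.sqrt ((s 0 - 1/2)^2 + (s 1 - -(r/2))^2) := by
    apply congrArg
    rw [hRX, hRY]
    linear_combination ((1/16:ℝ) + (1/4:ℝ)*(s 1)^2 + (-1/4:ℝ)*(s 0) + (1/4:ℝ)*(s 0)^2 + (1/4:ℝ)*r*(s 1) + (1/16:ℝ)*r^2) * hr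
  have eC : Real.sqrt ((RX - WX)^2 + (RY - WY)^2)
      = Real.sqrt ((s 0 - C)^2 + (s 1 - S)^2) := by
    apply congrArg
    rw [hRX, hRY, hWX, hWY]
    linear_combination ((-3/16:ℝ) + (1/4:ℝ)*(s 1)^2 + (1/4:ℝ)*(s 0) + (1/4:ℝ)*(s 0)^2 + (-1/2:ℝ)*S*(s 1) + (1/4:ℝ)*S^2 + (-1/4:ℝ)*C + (-1/2:ℝ)*C*(s 0) + (1/4:ℝ)*C^2 + (1/4:ℝ)*r*(s 1) + (-1/4:ℝ)*r*S + (1/16:ℝ)*r^2) * hr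
  calc Real.sqrt (QP r C S t)
      = Real.sqrt ((1/2 - WX)^2 + ((r/2 - t) - WY)^2) := by
        apply congrArg
        rw [hWX, hWY]
        simp only [QP, UX, UY]
        ring
    _ ≤ Real.sqrt ((1/2 - s 0)^2 + ((r/2 - t) - s 1)^2)
          + Real.sqrt ((s 0 - WX)^2 + (s 1 - WY)^2) :=
        tri2 (1/2) (r/2 - t) (s 0) (s 1) WX WY
    _ ≤ Real.sqrt ((1/2 - s 0)^2 + ((r/2 - t) - s 1)^2)
          + (Real.sqrt ((s 0 - RX)^2 + (s 1 - RY)^2)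
              + Real.sqrt ((RX - WX)^2 + (RY - WY)^2)) := by
        have := tri2 (s 0) (s 1) RX RY WX WY
        linarith
    _ = Real.sqrt ((s 0 - 1/2)^2 + (s 1 - -(r/2))^2)
          + Real.sqrt ((s 0 - C)^2 + (s 1 - S)^2)
          + Real.sqrt ((s 0 - 1/2)^2 + (s 1 - (r/2 - t))^2) := by
        rw [eA, eB, eC]
        ring

/-- Upper bound: the value `√Q` is attained. -/
lemma upper (t θ : ℝ)
    (hQ : 0 < QP (Real.sqrt 3) (Real.cos θ) (Real.sin θ) t)
    (hN : 0 ≤ DP (Real.sqrt 3) (Real.cos θ) (Real.sin θ) t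
            - GP (Real.sqrt 3) (Real.cos θ) (Real.sin θ) t)
    (hG : 0 ≤ GP (Real.sqrt 3) (Real.cos θ) (Real.sin θ) t)
    (hK : 0 ≤ QP (Real.sqrt 3) (Real.cos θ) (Real.sin θ) t
            - DP (Real.sqrt 3) (Real.cos θ) (Real.sin θ) t
            - GP (Real.sqrt 3) (Real.cos θ) (Real.sin θ) t) :
    ∃ s : EuclideanSpace ℝ (Fin 2),
      dist s (pt (1/2) (-(Real.sqrt 3 / 2))) + dist s (pt (Real.cos θ) (Real.sin θ))
          + dist s (pt (1/2) (Real.sqrt 3 / 2 - t))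
        = Real.sqrt (QP (Real.sqrt 3) (Real.cos θ) (Real.sin θ) t) := by
  set r := Real.sqrt 3 with hrdef
  set C := Real.cos θ with hCdef
  set S := Real.sin θ with hSdef
  have hr : r^2 = 3 := Real.sq_sqrt (by norm_num)
  have hQ0 : QP r C S t ≠ 0 := ne_of_gt hQ
  have hQs : 0 < Real.sqrt (QP r C S t) := Real.sqrt_pos.mpr hQ
  refine ⟨pt (1/2 + ((DP r C S t - GP r C S t)/QP r C S t) * UX r C S)
      ((r/2 - t) + ((DP r C S t - GP r C S t)/QP r C S t) * UY r C S t), ?_⟩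
  rw [dist_pts, dist_pts, dist_pts]
  have da : (1/2 + ((DP r C S t - GP r C S t)/QP r C S t) * UX r C S - 1/2)^2
        + ((r/2 - t) + ((DP r C S t - GP r C S t)/QP r C S t) * UY r C S t - -(r/2))^2
      = (2 * GP r C S t)^2 / QP r C S t := by
    have e1 : (1/2 + ((DP r C S t - GP r C S t)/QP r C S t) * UX r C S - 1/2)^2
          + ((r/2 - t) + ((DP r C S t - GP r C S t)/QP r C S t) * UY r C S t - -(r/2))^2
        = (((DP r C S t - GP r C S t) * UX r C S)^2
            + ((r - t) * QP r C S t + (DP r C S t - GP r C S t) * UY r C S t)^2)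
          / (QP r C S t)^2 := by
      field_simp
      ring
    rw [e1, ka r C S t hr]
    field_simp
  have dv : (1/2 + ((DP r C S t - GP r C S t)/QP r C S t) * UX r C S - C)^2
        + ((r/2 - t) + ((DP r C S t - GP r C S t)/QP r C S t) * UY r C S t - S)^2
      = (QP r C S t - DP r C S t - GP r C S t)^2 / QP r C S t := by
    have e1 : (1/2 + ((DP r C S t - GP r C S t)/QP r C S t) * UX r C S - C)^2
          + ((r/2 - t) + ((DP r C S t - GP r C S t)/QP r C S t) * UY r C S t - S)^2
        = (((1/2 - C) * QP r C S t + (DP r C S t - GP r C S t) * UX r C S)^2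
            + ((r/2 - t - S) * QP r C S t + (DP r C S t - GP r C S t) * UY r C S t)^2)
          / (QP r C S t)^2 := by
      field_simp
      ring
    rw [e1, kv r C S t hr]
    field_simp
  have dc : (1/2 + ((DP r C S t - GP r C S t)/QP r C S t) * UX r C S - 1/2)^2
        + ((r/2 - t) + ((DP r C S t - GP r C S t)/QP r C S t) * UY r C S t - (r/2 - t))^2
      = (DP r C S t - GP r C S t)^2 / QP r C S t := by
    have e1 : (1/2 + ((DP r C S t - GP r C S t)/QP r C S t) * UX r C S - 1/2)^2
          + ((r/2 - t) + ((DP r C S t - GP r C S t)/QP r C S t) * UY r C S t - (r/2 - t))^2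
        = ((DP r C S t - GP r C S t)^2 * ((UX r C S)^2 + (UY r C S t)^2))
          / (QP r C S t)^2 := by
      field_simp
      ring
    rw [e1]
    rw [show (UX r C S)^2 + (UY r C S t)^2 = QP r C S t from by simp only [QP]]
    field_simp
  rw [da, dv, dc]
  rw [Real.sqrt_div (by positivity) (QP r C S t),
      Real.sqrt_div (by positivity) (QP r C S t),
      Real.sqrt_div (by positivity) (QP r C S t)]
  rw [Real.sqrt_sq (by linarith : (0:ℝ) ≤ 2 * GP r C S t),
      Real.sqrt_sq hK, Real.sqrt_sq hN]
  rw [← add_div, ← add_div]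
  rw [show 2 * GP r C S t + (QP r C S t - DP r C S t - GP r C S t)
        + (DP r C S t - GP r C S t) = QP r C S t from by ring]
  exact Real.div_sqrt

/-- Exact value of the Steiner length under the positivity conditions. -/
lemma value (t θ : ℝ)
    (hQ : 0 < QP (Real.sqrt 3) (Real.cos θ) (Real.sin θ) t)
    (hN : 0 ≤ DP (Real.sqrt 3) (Real.cos θ) (Real.sin θ) t
            - GP (Real.sqrt 3) (Real.cos θ) (Real.sin θ) t)
    (hG : 0 ≤ GP (Real.sqrt 3) (Real.cos θ) (Real.sin θ) t)
    (hK : 0 ≤ QP (Real.sqrt 3) (Real.cos θ) (Real.sin θ) t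
            - DP (Real.sqrt 3) (Real.cos θ) (Real.sin θ) t
            - GP (Real.sqrt 3) (Real.cos θ) (Real.sin θ) t) :
    steinerLen (pt (1/2) (-(Real.sqrt 3 / 2))) (pt (1/2) (Real.sqrt 3 / 2 - t))
        (pt (Real.cos θ) (Real.sin θ))
      = Real.sqrt (QP (Real.sqrt 3) (Real.cos θ) (Real.sin θ) t) := by
  unfold steinerLen
  obtain ⟨s₀, hs₀⟩ := upper t θ hQ hN hG hK
  apply le_antisymm
  · apply csInf_le
    · refine ⟨0, ?_⟩
      rintro L ⟨s, rfl⟩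
      have := dist_nonneg (x := s) (y := pt (1/2) (-(Real.sqrt 3 / 2)))
      have := dist_nonneg (x := s) (y := pt (Real.cos θ) (Real.sin θ))
      have := dist_nonneg (x := s) (y := pt (1/2) (Real.sqrt 3 / 2 - t))
      linarith
    · exact ⟨s₀, hs₀.symm⟩
  · apply le_csInf
    · exact ⟨_, s₀, hs₀.symm⟩
    · rintro L ⟨s, rfl⟩
      exact lower t θ s

end SteinerAux

open SteinerAux in
/-- Let `a₂ = (1/2,-√3/2)` and `c = (1/2, √3/2 - t)` for suitable small `t > 0`. For `v(θ) =
(cos θ, sin θ)` on a small arc of the unit circle near `b₂ = (1,0)` below the `x`-axis, the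
Steiner tree length of `{a₂, v(θ), c}` is strictly increasing in `θ ∈ (-δ, 0]`; in
particular it attains its maximum at `θ = 0`, i.e. at `v = b₂`. -/
theorem steiner_length_monotone_on_arc :
    ∃ t₀ > (0 : ℝ), ∀ t : ℝ, 0 < t → t < t₀ → ∃ δ > (0 : ℝ),
      (StrictMonoOn
        (fun θ : ℝ => steinerLen !₂[1/2, -(Real.sqrt 3 / 2)] !₂[1/2, Real.sqrt 3 / 2 - t]
          !₂[Real.cos θ, Real.sin θ])
        (Set.Ioc (-δ) 0)) ∧
      (∀ θ ∈ Set.Ioc (-δ) (0 : ℝ),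
        steinerLen !₂[1/2, -(Real.sqrt 3 / 2)] !₂[1/2, Real.sqrt 3 / 2 - t]
            !₂[Real.cos θ, Real.sin θ] ≤
          steinerLen !₂[1/2, -(Real.sqrt 3 / 2)] !₂[1/2, Real.sqrt 3 / 2 - t] !₂[1, 0]) := by
  refine ⟨1/10, by norm_num, fun t ht0 ht1 => ?_⟩
  have hr : (Real.sqrt 3)^2 = 3 := Real.sq_sqrt (by norm_num)
  have hr0 : (0:ℝ) ≤ Real.sqrt 3 := Real.sqrt_nonneg 3
  have hr2 : Real.sqrt 3 ≤ 2 := by nlinarith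
  have hr1 : (1:ℝ) ≤ Real.sqrt 3 := by nlinarith
  set F : ℝ → ℝ := fun θ =>
    min (min (GP (Real.sqrt 3) (Real.cos θ) (Real.sin θ) t)
             (DP (Real.sqrt 3) (Real.cos θ) (Real.sin θ) t
               - GP (Real.sqrt 3) (Real.cos θ) (Real.sin θ) t))
        (min (QP (Real.sqrt 3) (Real.cos θ) (Real.sin θ) t
               - DP (Real.sqrt 3) (Real.cos θ) (Real.sin θ) t
               - GP (Real.sqrt 3) (Real.cos θ) (Real.sin θ) t)
             (QP (Real.sqrt 3) (Real.cos θ) (Real.sin θ) t)) with hF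
  have hFc : Continuous F := by
    rw [hF]
    simp only [GP, DP, QP, UX, UY]
    fun_prop
  have hF0 : 0 < F 0 := by
    rw [hF]
    simp only [Real.cos_zero, Real.sin_zero]
    have hA : 0 < GP (Real.sqrt 3) 1 0 t := by
      simp only [GP, UX]
      nlinarith
    have hB : 0 < DP (Real.sqrt 3) 1 0 t - GP (Real.sqrt 3) 1 0 t := by
      simp only [GP, DP, UX, UY]
      nlinarith
    have hCC : 0 < QP (Real.sqrt 3) 1 0 t - DP (Real.sqrt 3) 1 0 t - GP (Real.sqrt 3) 1 0 t := by
      have e : QP (Real.sqrt 3) 1 0 t - DP (Real.sqrt 3) 1 0 t - GP (Real.sqrt 3) 1 0 t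
          = Real.sqrt 3 * t / 3 := by
        simp only [GP, DP, QP, UX, UY]
        ring
      rw [e]
      nlinarith
    have hD : 0 < QP (Real.sqrt 3) 1 0 t := by
      simp only [QP, UX, UY]
      nlinarith [sq_nonneg (t - Real.sqrt 3)]
    simp only [lt_min_iff]
    exact ⟨⟨hA, hB⟩, ⟨hCC, hD⟩⟩
  obtain ⟨δ₀, hδ₀, hball⟩ := Metric.continuousAt_iff.mp hFc.continuousAt (F 0) hF0
  set δ : ℝ := min δ₀ 1 with hδdef
  have hδpos : 0 < δ := lt_min hδ₀ one_pos
  have hδ1 : δ ≤ 1 := min_le_right _ _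
  have hδ0' : δ ≤ δ₀ := min_le_left _ _
  have hpos : ∀ θ ∈ Set.Ioc (-δ) (0:ℝ),
      0 < GP (Real.sqrt 3) (Real.cos θ) (Real.sin θ) t ∧
      0 < DP (Real.sqrt 3) (Real.cos θ) (Real.sin θ) t
            - GP (Real.sqrt 3) (Real.cos θ) (Real.sin θ) t ∧
      0 < QP (Real.sqrt 3) (Real.cos θ) (Real.sin θ) t
            - DP (Real.sqrt 3) (Real.cos θ) (Real.sin θ) t
            - GP (Real.sqrt 3) (Real.cos θ) (Real.sin θ) t ∧
      0 < QP (Real.sqrt 3) (Real.cos θ) (Real.sin θ) t := by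
    intro θ hθ
    have hdist : dist θ 0 < δ₀ := by
      rw [Real.dist_eq, sub_zero, abs_lt]
      constructor
      · have h1 := hθ.1
        linarith
      · have h2 := hθ.2
        linarith
    have hb := hball hdist
    rw [Real.dist_eq, abs_lt] at hb
    have hFθ : 0 < F θ := by linarith [hb.1]
    rw [hF] at hFθ
    simp only [lt_min_iff] at hFθ
    exact ⟨hFθ.1.1, hFθ.1.2, hFθ.2.1, hFθ.2.2⟩
  have hval : ∀ θ ∈ Set.Ioc (-δ) (0:ℝ),
      steinerLen (pt (1/2) (-(Real.sqrt 3 / 2))) (pt (1/2) (Real.sqrt 3 / 2 - t))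
          (pt (Real.cos θ) (Real.sin θ))
        = Real.sqrt (QP (Real.sqrt 3) (Real.cos θ) (Real.sin θ) t) := by
    intro θ hθ
    obtain ⟨hA, hB, hCC, hD⟩ := hpos θ hθ
    exact value t θ hD hB.le hA.le hCC.le
  have hπ := Real.pi_gt_three
  have hQmono : ∀ θ₁ ∈ Set.Ioc (-δ) (0:ℝ), ∀ θ₂ ∈ Set.Ioc (-δ) (0:ℝ), θ₁ < θ₂ →
      QP (Real.sqrt 3) (Real.cos θ₁) (Real.sin θ₁) t
        < QP (Real.sqrt 3) (Real.cos θ₂) (Real.sin θ₂) t := by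
    intro θ₁ h₁ θ₂ h₂ hlt
    have hc : Real.cos θ₁ < Real.cos θ₂ := by
      have m1 : -θ₂ ∈ Set.Icc (0:ℝ) π := ⟨by linarith [h₂.2], by linarith [h₂.1]⟩
      have m2 : -θ₁ ∈ Set.Icc (0:ℝ) π := ⟨by linarith [hlt, h₂.2], by linarith [h₁.1]⟩
      have hcc := Real.strictAntiOn_cos m1 m2 (by linarith)
      rwa [Real.cos_neg, Real.cos_neg] at hcc
    have hs : Real.sin θ₁ ≤ Real.sin θ₂ := by
      have m1 : θ₁ ∈ Set.Icc (-(π/2)) (π/2) := ⟨by linarith [h₁.1], by linarith [h₁.2]⟩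
      have m2 : θ₂ ∈ Set.Icc (-(π/2)) (π/2) := ⟨by linarith [h₂.1], by linarith [h₂.2]⟩
      exact Real.strictMonoOn_sin.monotoneOn m1 m2 hlt.le
    rw [qs (Real.sqrt 3) (Real.cos θ₁) (Real.sin θ₁) t hr (Real.sin_sq_add_cos_sq θ₁),
        qs (Real.sqrt 3) (Real.cos θ₂) (Real.sin θ₂) t hr (Real.sin_sq_add_cos_sq θ₂)]
    have hrt : Real.sqrt 3 * t < 2 := by nlinarith
    nlinarith
  have hmono' : StrictMonoOn
      (fun θ : ℝ => steinerLen (pt (1/2) (-(Real.sqrt 3 / 2)))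
        (pt (1/2) (Real.sqrt 3 / 2 - t)) (pt (Real.cos θ) (Real.sin θ)))
      (Set.Ioc (-δ) 0) := by
    intro θ₁ h₁ θ₂ h₂ hlt
    simp only
    rw [hval θ₁ h₁, hval θ₂ h₂]
    apply Real.sqrt_lt_sqrt
    · simp only [QP]
      positivity
    · exact hQmono θ₁ h₁ θ₂ h₂ hlt
  have h0mem : (0:ℝ) ∈ Set.Ioc (-δ) (0:ℝ) := ⟨by linarith, le_refl 0⟩
  have hle : ∀ θ ∈ Set.Ioc (-δ) (0:ℝ),
      steinerLen (pt (1/2) (-(Real.sqrt 3 / 2))) (pt (1/2) (Real.sqrt 3 / 2 - t))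
          (pt (Real.cos θ) (Real.sin θ))
        ≤ steinerLen (pt (1/2) (-(Real.sqrt 3 / 2))) (pt (1/2) (Real.sqrt 3 / 2 - t))
            (pt 1 0) := by
    intro θ hθ
    have h10 : pt (Real.cos 0) (Real.sin 0) = pt 1 0 := by
      rw [Real.cos_zero, Real.sin_zero]
    rcases eq_or_lt_of_le hθ.2 with h | h
    · rw [← h10, ← h]
    · calc steinerLen (pt (1/2) (-(Real.sqrt 3 / 2))) (pt (1/2) (Real.sqrt 3 / 2 - t))
            (pt (Real.cos θ) (Real.sin θ))
          ≤ steinerLen (pt (1/2) (-(Real.sqrt 3 / 2))) (pt (1/2) (Real.sqrt 3 / 2 - t))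
            (pt (Real.cos 0) (Real.sin 0)) := le_of_lt (hmono' hθ h0mem h)
        _ = _ := by rw [h10]
  exact ⟨δ, hδpos, hmono', hle⟩
end

section
/- Let a₁ = (-1/2, √3/2) and consider points p, p', q, q' in the plane with d(p,q) = d(p',q'), d(a₁,p') ≥ d(a₁,p), with a₁, p', q' collinear (p' between a₁ and q'), and suppose ∠(q', a₁, p') < ∠(q, a₁, p) and ∠(a₁, q', p') < ∠(a₁, q, p). Then d(a₁,q') − d(a₁,p') > d(a₁,q) − d(a₁,p). -/
open Real EuclideanGeometry

/-- Triangle comparison: with `a₁ = (-1/2, √3/2)`, if `d(p,q) = d(p',q')`,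
`d(a₁,p') ≥ d(a₁,p)`, the points `a₁, p', q'` are collinear with `p'` between `a₁` and
`q'`, and the angles `∠(q',a₁,p') < ∠(q,a₁,p)` and `∠(a₁,q',p') < ∠(a₁,q,p)`, then
`d(a₁,q') − d(a₁,p') > d(a₁,q) − d(a₁,p)`. -/
theorem angle_shrink_distance_difference (a₁ p p' q q' : EuclideanSpace ℝ (Fin 2))
    (ha₁ : a₁ = ![-1/2, Real.sqrt 3 / 2])
    (hlen : dist p q = dist p' q')
    (hge : dist a₁ p ≤ dist a₁ p')
    (hbtw : Wbtw ℝ a₁ p' q')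
    (hang₁ : ∠ q' a₁ p' < ∠ q a₁ p)
    (hang₂ : ∠ a₁ q' p' < ∠ a₁ q p) :
    dist a₁ q - dist a₁ p < dist a₁ q' - dist a₁ p' := by
  have hq' : dist a₁ q' = dist a₁ p' + dist p' q' := (hbtw.dist_add_dist).symm
  have hRHS : dist a₁ q' - dist a₁ p' = dist p q := by rw [hq', hlen]; ring
  rw [hRHS]
  by_contra hcon
  push_neg at hcon
  have htri : dist a₁ q ≤ dist a₁ p + dist p q := dist_triangle a₁ p q
  have heq : dist a₁ p + dist p q = dist a₁ q := by linarith
  have hW : Wbtw ℝ a₁ p q := dist_add_dist_eq_iff.mp heq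
  rcases eq_or_ne p a₁ with hpa | hpa
  · subst hpa
    rcases eq_or_ne q p with hqp | hqp
    · subst hqp
      have h0 : dist p' q' = 0 := by simpa using hlen.symm
      have hpq' : p' = q' := by rwa [dist_eq_zero] at h0
      subst hpq'
      rw [EuclideanGeometry.angle_self_right, EuclideanGeometry.angle_self_left] at hang₂
      exact lt_irrefl _ hang₂
    · have h1 : ∠ p q p = 0 := EuclideanGeometry.angle_self_of_ne (by simpa using hqp.symm)
      have h2 := EuclideanGeometry.angle_nonneg p q' p'
      linarith
  · have hz : ∠ p a₁ q = 0 := hW.angle₂₁₃_eq_zero_of_ne hpa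
    rw [EuclideanGeometry.angle_comm] at hz
    have h2 := EuclideanGeometry.angle_nonneg q' a₁ p'
    linarith
end
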